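/- arXiv:1601.02187 — 5 statements merged into one kernel-verified Lean document; each statement's English description precedes it below -/
import Mathlib

section
/- Let Θ be a connected simple graph on which a group G acts. Let 𝒫 be a property of finite sets of edges of Θ which is stable under the G-action, under passing to subsets, and under finite unions. If there exists a set of cutting edges whose boundary set has 𝒫 (i.e. the set of cutting edges itself has 𝒫), then there exists a cut C whose boundary has 𝒫, such that the cuts C and g·C are nested for every g ∈ G, and such that the complement C* is also a cut. -/
section Cuts

variable {V : Type*}

/-- A finite set `F` of edges of `Θ` is a set of *cutting edges* if `Θ − F` is
disconnected and has at least two infinite connected components. -/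
def IsCuttingEdges (Θ : SimpleGraph V) (F : Set (Sym2 V)) : Prop :=
  F.Finite ∧ F ⊆ Θ.edgeSet ∧ ¬(Θ.deleteEdges F).Connected ∧
    ∃ K L : (Θ.deleteEdges F).ConnectedComponent,
      K ≠ L ∧ K.supp.Infinite ∧ L.supp.Infinite

/-- A *cut* is the vertex set of an infinite connected component of `Θ − F`
for some set of cutting edges `F`. -/
def IsCut (Θ : SimpleGraph V) (C : Set V) : Prop :=
  ∃ F : Set (Sym2 V), IsCuttingEdges Θ F ∧
    ∃ K : (Θ.deleteEdges F).ConnectedComponent, K.supp.Infinite ∧ C = K.supp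

/-- The *boundary* of a set of vertices `C`: all edges of `Θ` with exactly one
endpoint in `C`. -/
def cutBdry (Θ : SimpleGraph V) (C : Set V) : Set (Sym2 V) :=
  {e | e ∈ Θ.edgeSet ∧ ∃ u v : V, e = s(u, v) ∧ u ∈ C ∧ v ∉ C}

/-- A `P`-cut: a cut whose boundary has property `P`. -/
def IsPCut (Θ : SimpleGraph V) (P : Set (Sym2 V) → Prop) (C : Set V) : Prop :=
  IsCut Θ C ∧ P (cutBdry Θ C)

/-- A `P`-narrow cut: a `P`-cut whose boundary has minimal cardinality among
all `P`-cuts. -/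
def IsPNarrow (Θ : SimpleGraph V) (P : Set (Sym2 V) → Prop) (C : Set V) : Prop :=
  IsPCut Θ P C ∧ ∀ D : Set V, IsPCut Θ P D → (cutBdry Θ C).ncard ≤ (cutBdry Θ D).ncard

/-- Two subsets `C` and `D` of the vertex set are *nested* if `C` or its
complement is contained in `D` or its complement. -/
def Nested (C D : Set V) : Prop :=
  C ⊆ D ∨ C ⊆ Dᶜ ∨ Cᶜ ⊆ D ∨ Cᶜ ⊆ Dᶜ

end Cuts

/-!
Call an infinite, co-infinite set of vertices whose finite boundary satisfies `P` a `P`-set,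
and call it narrow if its boundary is as small as possible. Both sides of a narrow set are
connected (a second component would need further boundary edges), so a narrow set and its
complement are cuts. By submodularity, `|∂(C ∩ D)| + |∂(Cᶜ ∩ Dᶜ)| ≤ |∂C| + |∂D|`, opposite
infinite corners of two crossing narrow sets are narrow again. Only finitely many narrow sets
cross a given one, so some narrow `C` is crossed by the fewest. A translate `g • C` is narrow
and crossed by as many narrow sets as `C`; if it crossed `C`, every narrow set crossing one of
two opposite corners would cross `C` or `g • C`, and one corner would be crossed by fewer
narrow sets than `C`.
-/

namespace Kroen

open SimpleGraph Set

variable {V : Type*} {Θ : SimpleGraph V} {X C D : Set V} {x y : V}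

lemma mk_mem_cutBdry_iff {a b : V} :
    s(a, b) ∈ cutBdry Θ X ↔ Θ.Adj a b ∧ (a ∈ X ↔ b ∉ X) := by
  simp only [cutBdry, mem_ofPred_eq, mem_edgeSet, Sym2.eq_iff]
  constructor
  · rintro ⟨h, u, v, ⟨rfl, rfl⟩ | ⟨rfl, rfl⟩, hu, hv⟩ <;> tauto
  · rintro ⟨h, hab⟩
    by_cases ha : a ∈ X
    · exact ⟨h, a, b, Or.inl ⟨rfl, rfl⟩, ha, hab.1 ha⟩
    · exact ⟨h, b, a, Or.inr ⟨rfl, rfl⟩, by tauto, ha⟩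

lemma mk_mem_cutBdry {a b : V} (hab : Θ.Adj a b) (ha : a ∈ X) (hb : b ∉ X) :
    s(a, b) ∈ cutBdry Θ X :=
  mk_mem_cutBdry_iff.2 ⟨hab, iff_of_true ha hb⟩

lemma cutBdry_compl : cutBdry Θ Xᶜ = cutBdry Θ X := by
  ext e
  induction e using Sym2.ind
  simp only [mk_mem_cutBdry_iff, mem_compl_iff]
  tauto

lemma cutBdry_inter_subset : cutBdry Θ (C ∩ D) ⊆ cutBdry Θ C ∪ cutBdry Θ D := by
  intro e
  induction e using Sym2.ind
  simp only [mk_mem_cutBdry_iff, mem_inter_iff, mem_union]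
  tauto

lemma cutBdry_compl_inter_compl_subset :
    cutBdry Θ (Cᶜ ∩ Dᶜ) ⊆ cutBdry Θ C ∪ cutBdry Θ D := by
  simpa only [cutBdry_compl] using cutBdry_inter_subset (Θ := Θ) (C := Cᶜ) (D := Dᶜ)

lemma cutBdry_inter_inter_compl_subset :
    cutBdry Θ (C ∩ D) ∩ cutBdry Θ (Cᶜ ∩ Dᶜ) ⊆ cutBdry Θ C ∩ cutBdry Θ D := by
  intro e
  induction e using Sym2.ind
  simp only [mk_mem_cutBdry_iff, mem_inter_iff, mem_compl_iff]
  tauto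

lemma cutBdry_deleteEdges {F : Set (Sym2 V)} :
    cutBdry (Θ.deleteEdges F) X = cutBdry Θ X \ F := by
  ext e
  induction e using Sym2.ind
  simp only [mk_mem_cutBdry_iff, deleteEdges_adj, mem_sdiff]
  tauto

lemma ncard_cutBdry_inter_add_le (hC : (cutBdry Θ C).Finite) (hD : (cutBdry Θ D).Finite) :
    (cutBdry Θ (C ∩ D)).ncard + (cutBdry Θ (Cᶜ ∩ Dᶜ)).ncard ≤
      (cutBdry Θ C).ncard + (cutBdry Θ D).ncard := by
  have hA : cutBdry Θ (C ∩ D) ⊆ cutBdry Θ C ∪ cutBdry Θ D := cutBdry_inter_subset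
  have hB : cutBdry Θ (Cᶜ ∩ Dᶜ) ⊆ cutBdry Θ C ∪ cutBdry Θ D := cutBdry_compl_inter_compl_subset
  have hCD := hC.union hD
  calc (cutBdry Θ (C ∩ D)).ncard + (cutBdry Θ (Cᶜ ∩ Dᶜ)).ncard
      = (cutBdry Θ (C ∩ D) ∪ cutBdry Θ (Cᶜ ∩ Dᶜ)).ncard +
          (cutBdry Θ (C ∩ D) ∩ cutBdry Θ (Cᶜ ∩ Dᶜ)).ncard :=
        (ncard_union_add_ncard_inter _ _ (hCD.subset hA) (hCD.subset hB)).symm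
    _ ≤ (cutBdry Θ C ∪ cutBdry Θ D).ncard + (cutBdry Θ C ∩ cutBdry Θ D).ncard :=
        add_le_add (ncard_le_ncard (union_subset hA hB) hCD)
          (ncard_le_ncard cutBdry_inter_inter_compl_subset (hC.inter_of_left _))
    _ = (cutBdry Θ C).ncard + (cutBdry Θ D).ncard := ncard_union_add_ncard_inter _ _ hC hD

lemma cutBdry_nonempty (hconn : Θ.Connected) (hx : x ∈ X) (hy : y ∉ X) :
    (cutBdry Θ X).Nonempty := by
  obtain ⟨p⟩ := hconn.preconnected x y
  obtain ⟨d, -, hd₁, hd₂⟩ := p.exists_boundary_dart X hx hy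
  exact ⟨_, mk_mem_cutBdry d.adj hd₁ hd₂⟩

lemma _root_.SimpleGraph.Reachable.mem_and_reachable_of_closed {G₁ G₂ : SimpleGraph V}
    {T : Set V} (h : G₁.Reachable x y) (hT : ∀ a b, G₁.Adj a b → a ∈ T → b ∈ T ∧ G₂.Adj a b)
    (hx : x ∈ T) : y ∈ T ∧ G₂.Reachable x y := by
  obtain ⟨w⟩ := h
  induction w with
  | nil => exact ⟨hx, .rfl⟩
  | cons hab _ ih =>
    obtain ⟨hb, hab'⟩ := hT _ _ hab hx
    obtain ⟨hy, hr⟩ := ih hb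
    exact ⟨hy, hab'.reachable.trans hr⟩

/-- Walks in `Θ − ∂X` cannot leave `X`, so this says that `X` induces a connected subgraph. -/
def SideConnected (Θ : SimpleGraph V) (X : Set V) : Prop :=
  ∀ ⦃x⦄, x ∈ X → ∀ ⦃y⦄, y ∈ X → (Θ.deleteEdges (cutBdry Θ X)).Reachable x y

def sideComponent (Θ : SimpleGraph V) (X : Set V) (x : V) : Set V :=
  {y | (Θ.deleteEdges (cutBdry Θ X)).Reachable x y}

lemma mem_of_reachable_deleteEdges_cutBdry (hx : x ∈ X)
    (h : (Θ.deleteEdges (cutBdry Θ X)).Reachable x y) : y ∈ X := by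
  refine (h.mem_and_reachable_of_closed (G₂ := Θ) (fun a b hab ha => ?_) hx).1
  obtain ⟨hab, hnot⟩ := (deleteEdges_adj ..).1 hab
  refine ⟨?_, hab⟩
  by_contra hb
  exact hnot (mk_mem_cutBdry hab ha hb)

lemma self_mem_sideComponent : x ∈ sideComponent Θ X x := Reachable.rfl

lemma sideComponent_subset (hx : x ∈ X) : sideComponent Θ X x ⊆ X :=
  fun _ => mem_of_reachable_deleteEdges_cutBdry hx

lemma cutBdry_sideComponent_subset : cutBdry Θ (sideComponent Θ X x) ⊆ cutBdry Θ X := by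
  intro e he
  induction e using Sym2.ind with | _ u v => ?_
  obtain ⟨huv, hiff⟩ := mk_mem_cutBdry_iff.1 he
  by_contra hX
  have hr : (Θ.deleteEdges (cutBdry Θ X)).Adj u v := (deleteEdges_adj ..).2 ⟨huv, hX⟩
  have : u ∈ sideComponent Θ X x ↔ v ∈ sideComponent Θ X x :=
    ⟨fun hu => Reachable.trans hu hr.reachable, fun hv => Reachable.trans hv hr.symm.reachable⟩
  tauto

lemma disjoint_cutBdry_sideComponent {z : V} (hx : x ∈ X) (hz : z ∈ X)
    (hxz : z ∉ sideComponent Θ X x) :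
    Disjoint (cutBdry Θ (sideComponent Θ X x)) (cutBdry Θ (sideComponent Θ X z)) := by
  refine disjoint_left.2 fun e hex hez => ?_
  induction e using Sym2.ind with | _ u v => ?_
  have hsides : ∀ w, (w ∈ sideComponent Θ X x → w ∈ X) ∧ (w ∈ sideComponent Θ X z → w ∈ X) ∧
      ¬(w ∈ sideComponent Θ X x ∧ w ∈ sideComponent Θ X z) := fun w =>
    ⟨fun h => sideComponent_subset hx h, fun h => sideComponent_subset hz h,
      fun ⟨hwx, hwz⟩ => hxz (Reachable.trans hwx (Reachable.symm hwz))⟩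
  obtain ⟨-, hux⟩ := mk_mem_cutBdry_iff.1 hex
  obtain ⟨-, huz⟩ := mk_mem_cutBdry_iff.1 hez
  obtain ⟨-, huX⟩ := mk_mem_cutBdry_iff.1 (cutBdry_sideComponent_subset hex)
  have hu := hsides u
  have hv := hsides v
  tauto

lemma exists_adj_sideComponent_not_mem (hconn : Θ.Connected) (hx : x ∈ X) (hy : y ∉ X) :
    ∃ a b, Θ.Adj a b ∧ a ∈ sideComponent Θ X x ∧ b ∉ X := by
  obtain ⟨p⟩ := hconn.preconnected x y
  obtain ⟨d, -, ha, hb⟩ := p.exists_boundary_dart _ self_mem_sideComponent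
    fun h => hy (sideComponent_subset hx h)
  refine ⟨_, _, d.adj, ha, fun hbX => hb (Reachable.trans ha (Adj.reachable ?_))⟩
  refine (deleteEdges_adj ..).2 ⟨d.adj, fun h => ?_⟩
  exact (mk_mem_cutBdry_iff.1 h).2.1 (sideComponent_subset hx ha) hbX

/-- Every side component of `X` reaches `Xᶜ` through an edge of `∂X`, so when `∂X` is finite
there are only finitely many of them. -/
lemma exists_infinite_sideComponent (hconn : Θ.Connected) (hX : X.Infinite)
    (hfin : (cutBdry Θ X).Finite) (hXc : Xᶜ.Nonempty) :
    ∃ x ∈ X, (sideComponent Θ X x).Infinite := by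
  classical
  by_contra! hall
  obtain ⟨y, hy⟩ := hXc
  refine hX (Finite.subset (hfin.biUnion fun e _ =>
    (e.toFinset.finite_toSet.inter_of_left X).biUnion fun a ha => hall a ha.2) fun x hx => ?_)
  obtain ⟨a, b, hab, ha, hb⟩ := exists_adj_sideComponent_not_mem hconn hx hy
  exact mem_biUnion (mk_mem_cutBdry hab (sideComponent_subset hx ha) hb)
    (mem_biUnion ⟨Sym2.mem_toFinset.2 (Sym2.mem_mk_left a b), sideComponent_subset hx ha⟩
      (Reachable.symm ha))

def IsTight (Θ : SimpleGraph V) (X : Set V) : Prop :=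
  SideConnected Θ X ∧ SideConnected Θ Xᶜ

lemma supp_connectedComponentMk_eq (hX : SideConnected Θ X) (hx : x ∈ X) :
    ((Θ.deleteEdges (cutBdry Θ X)).connectedComponentMk x).supp = X := by
  ext z
  rw [ConnectedComponent.mem_supp_iff, ConnectedComponent.eq]
  exact ⟨fun h => mem_of_reachable_deleteEdges_cutBdry hx h.symm, fun hz => hX hz hx⟩

lemma IsTight.isCut (hX : IsTight Θ X) (hinf : X.Infinite) (hcinf : Xᶜ.Infinite)
    (hfin : (cutBdry Θ X).Finite) : IsCut Θ X := by
  obtain ⟨x, hx⟩ := hinf.nonempty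
  obtain ⟨y, hy⟩ := hcinf.nonempty
  have hsuppx := supp_connectedComponentMk_eq hX.1 hx
  have hsuppy := supp_connectedComponentMk_eq hX.2 hy
  rw [cutBdry_compl] at hsuppy
  refine ⟨cutBdry Θ X, ⟨hfin, fun e he => he.1, fun hconn => hy ?_, _, _, fun hxy => hy ?_,
    by rwa [hsuppx], by rwa [hsuppy]⟩, _, by rwa [hsuppx], hsuppx.symm⟩
  · exact mem_of_reachable_deleteEdges_cutBdry hx (hconn.preconnected x y)
  · rw [← hsuppx, hxy]
    exact ConnectedComponent.connectedComponentMk_mem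

lemma deleteEdges_cutBdry_deleteEdges {F : Set (Sym2 V)} (hF : F ⊆ cutBdry Θ X) :
    (Θ.deleteEdges F).deleteEdges (cutBdry (Θ.deleteEdges F) X) =
      Θ.deleteEdges (cutBdry Θ X) := by
  rw [cutBdry_deleteEdges, deleteEdges_deleteEdges, union_sdiff_cancel hF]

lemma IsTight.deleteEdges {F : Set (Sym2 V)} (hX : IsTight Θ X) (hF : F ⊆ cutBdry Θ X) :
    IsTight (Θ.deleteEdges F) X := by
  have hFc : F ⊆ cutBdry Θ Xᶜ := by rwa [cutBdry_compl]
  refine ⟨fun a ha b hb => ?_, fun a ha b hb => ?_⟩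
  · rw [deleteEdges_cutBdry_deleteEdges hF]
    exact hX.1 ha hb
  · rw [deleteEdges_cutBdry_deleteEdges hFc]
    exact hX.2 ha hb

def tightSeparators (Θ : SimpleGraph V) (m : ℕ) (u v : V) : Set (Set V) :=
  {C | u ∈ C ∧ v ∉ C ∧ IsTight Θ C ∧ (cutBdry Θ C).Finite ∧ (cutBdry Θ C).ncard ≤ m}

lemma tightSeparators_zero (hconn : Θ.Connected) (u v : V) : tightSeparators Θ 0 u v = ∅ := by
  refine eq_empty_iff_forall_notMem.2 fun C ⟨hu, hv, _, hfin, hm⟩ => ?_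
  rw [Nat.le_zero, ncard_eq_zero hfin] at hm
  exact (cutBdry_nonempty hconn hu hv).ne_empty hm

lemma tightSeparators_subset_biUnion_darts {u v : V} (m : ℕ) (p : Θ.Walk u v) :
    tightSeparators Θ m u v ⊆ ⋃ d ∈ p.darts, tightSeparators Θ m d.fst d.snd := by
  rintro C ⟨hu, hv, hC⟩
  obtain ⟨d, hd, h₁, h₂⟩ := p.exists_boundary_dart C hu hv
  exact mem_biUnion hd ⟨h₁, h₂, hC⟩

lemma tightSeparators_succ_subset (m : ℕ) (hxy : Θ.Adj x y) :
    tightSeparators Θ (m + 1) x y ⊆ tightSeparators (Θ.deleteEdges {s(x, y)}) m x y := by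
  rintro C ⟨hx, hy, hC, hfin, hm⟩
  have he : s(x, y) ∈ cutBdry Θ C := mk_mem_cutBdry hxy hx hy
  refine ⟨hx, hy, hC.deleteEdges (singleton_subset_iff.2 he), ?_, ?_⟩ <;>
    rw [cutBdry_deleteEdges]
  · exact hfin.sdiff
  · rw [ncard_sdiff_singleton_of_mem he]
    omega

lemma tightSeparators_subset_singleton (m : ℕ) (hxy : Θ.Adj x y)
    (hbridge : ¬(Θ.deleteEdges {s(x, y)}).Reachable x y) :
    tightSeparators Θ m x y ⊆ {{z | (Θ.deleteEdges {s(x, y)}).Reachable x z}} := by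
  rintro C ⟨hx, hy, hC, -⟩
  have hle : Θ.deleteEdges (cutBdry Θ C) ≤ Θ.deleteEdges {s(x, y)} :=
    deleteEdges_anti (singleton_subset_iff.2 (mk_mem_cutBdry hxy hx hy))
  refine Subset.antisymm (fun z hz => (hC.1 hx hz).mono hle) fun z hz => ?_
  by_contra hzC
  have hzy := hC.2 hzC hy
  rw [cutBdry_compl] at hzy
  exact hbridge (hz.trans (hzy.mono hle))

/-- Induction on `m`: a separator cuts an edge of a fixed walk from `u` to `v`; deleting that
edge lowers `m`, unless the edge is a bridge, across which the separator is determined. -/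
lemma finite_tightSeparators (m : ℕ) :
    ∀ {Θ : SimpleGraph V}, Θ.Connected → ∀ u v, (tightSeparators Θ m u v).Finite := by
  induction m with
  | zero => exact fun hconn u v => tightSeparators_zero hconn u v ▸ finite_empty
  | succ m ih =>
    intro Θ hconn u v
    obtain ⟨p⟩ := hconn.preconnected u v
    refine (p.darts.finite_toSet.biUnion fun d _ => ?_).subset
      (tightSeparators_subset_biUnion_darts _ p)
    by_cases hbridge : (Θ.deleteEdges {s(d.fst, d.snd)}).Reachable d.fst d.snd
    · have hconn' := hconn.connected_delete_edge_of_not_isBridge (not_not.2 hbridge)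
      exact (ih hconn' _ _).subset (tightSeparators_succ_subset m d.adj)
    · exact (finite_singleton _).subset (tightSeparators_subset_singleton _ d.adj hbridge)

section PSets

variable (Θ) (P : Set (Sym2 V) → Prop)

def IsPSet (X : Set V) : Prop :=
  X.Infinite ∧ Xᶜ.Infinite ∧ (cutBdry Θ X).Finite ∧ P (cutBdry Θ X)

noncomputable def minPBdry : ℕ :=
  sInf {n | ∃ X, IsPSet Θ P X ∧ (cutBdry Θ X).ncard = n}

def IsNarrowPSet (X : Set V) : Prop :=
  IsPSet Θ P X ∧ (cutBdry Θ X).ncard = minPBdry Θ P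

end PSets

variable {P : Set (Sym2 V) → Prop}

lemma minPBdry_le (hX : IsPSet Θ P X) : minPBdry Θ P ≤ (cutBdry Θ X).ncard :=
  Nat.sInf_le ⟨X, hX, rfl⟩

lemma IsPSet.exists_isNarrowPSet (hX : IsPSet Θ P X) : ∃ C, IsNarrowPSet Θ P C := by
  obtain ⟨C, hC, hk⟩ :=
    Nat.sInf_mem (s := {n | ∃ X, IsPSet Θ P X ∧ (cutBdry Θ X).ncard = n}) ⟨_, X, hX, rfl⟩
  exact ⟨C, hC, hk⟩

lemma exists_isPSet_of_isCuttingEdges {F : Set (Sym2 V)}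
    (hsub : ∀ F F' : Set (Sym2 V), F.Finite → F' ⊆ F → P F → P F')
    (hF : IsCuttingEdges Θ F) (hPF : P F) : ∃ X, IsPSet Θ P X := by
  obtain ⟨hfin, -, -, K, L, hKL, hK, hL⟩ := hF
  have hbdry : cutBdry Θ K.supp ⊆ F := by
    intro e he
    induction e using Sym2.ind with | _ u v => ?_
    obtain ⟨huv, hiff⟩ := mk_mem_cutBdry_iff.1 he
    by_contra heF
    have hKuv := ConnectedComponent.connectedComponentMk_eq_of_adj
      ((deleteEdges_adj ..).2 ⟨huv, heF⟩ : (Θ.deleteEdges F).Adj u v)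
    simp only [ConnectedComponent.mem_supp_iff, hKuv] at hiff
    tauto
  refine ⟨K.supp, hK, hL.mono fun z hzL hzK => hKL ?_, hfin.subset hbdry,
    hsub F _ hfin hbdry hPF⟩
  rw [ConnectedComponent.mem_supp_iff] at hzL hzK
  rw [← hzK, hzL]

lemma IsPSet.compl (hX : IsPSet Θ P X) : IsPSet Θ P Xᶜ := by
  obtain ⟨h₁, h₂, h₃, h₄⟩ := hX
  exact ⟨h₂, by rwa [compl_compl], by rwa [cutBdry_compl], by rwa [cutBdry_compl]⟩

lemma IsNarrowPSet.compl (hX : IsNarrowPSet Θ P X) : IsNarrowPSet Θ P Xᶜ :=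
  ⟨hX.1.compl, by rw [cutBdry_compl]; exact hX.2⟩

/-- An infinite side component already uses `minPBdry` edges of `∂X`; any further side
component would need at least one more. -/
lemma IsNarrowPSet.sideConnected (hconn : Θ.Connected)
    (hsub : ∀ F F' : Set (Sym2 V), F.Finite → F' ⊆ F → P F → P F')
    (hX : IsNarrowPSet Θ P X) : SideConnected Θ X := by
  obtain ⟨⟨hinf, hcinf, hfin, hP⟩, hk⟩ := hX
  obtain ⟨x, hx, hxinf⟩ := exists_infinite_sideComponent hconn hinf hfin hcinf.nonempty
  suffices hall : X ⊆ sideComponent Θ X x from fun p hp q hq => (hall hp).symm.trans (hall hq)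
  intro z hz
  by_contra hzx
  have hxP : IsPSet Θ P (sideComponent Θ X x) :=
    ⟨hxinf, hcinf.mono (compl_subset_compl.2 (sideComponent_subset hx)),
      hfin.subset cutBdry_sideComponent_subset, hsub _ _ hfin cutBdry_sideComponent_subset hP⟩
  obtain ⟨y, hy⟩ := hcinf.nonempty
  have hzpos : 0 < (cutBdry Θ (sideComponent Θ X z)).ncard :=
    (ncard_pos (hfin.subset cutBdry_sideComponent_subset)).2 <|
      cutBdry_nonempty hconn self_mem_sideComponent fun h => hy (sideComponent_subset hz h)
  have hsplit := ncard_union_eq (disjoint_cutBdry_sideComponent hx hz hzx)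
    (hfin.subset cutBdry_sideComponent_subset) (hfin.subset cutBdry_sideComponent_subset)
  have hle : (cutBdry Θ (sideComponent Θ X x) ∪ cutBdry Θ (sideComponent Θ X z)).ncard ≤
      (cutBdry Θ X).ncard :=
    ncard_le_ncard (union_subset cutBdry_sideComponent_subset cutBdry_sideComponent_subset) hfin
  have := minPBdry_le hxP
  omega

lemma IsNarrowPSet.isCut (hconn : Θ.Connected)
    (hsub : ∀ F F' : Set (Sym2 V), F.Finite → F' ⊆ F → P F → P F')
    (hX : IsNarrowPSet Θ P X) : IsCut Θ X :=
  IsTight.isCut ⟨hX.sideConnected hconn hsub, hX.compl.sideConnected hconn hsub⟩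
    hX.1.1 hX.1.2.1 hX.1.2.2.1

/-- By submodularity, the two opposite corners `C ∩ D` and `Cᶜ ∩ Dᶜ` of narrow sets share
`2 * minPBdry` boundary edges, while each needs at least `minPBdry`. -/
lemma IsNarrowPSet.inter
    (hsub : ∀ F F' : Set (Sym2 V), F.Finite → F' ⊆ F → P F → P F')
    (hunion : ∀ F F' : Set (Sym2 V), F.Finite → F'.Finite → P F → P F' → P (F ∪ F'))
    (hC : IsNarrowPSet Θ P C) (hD : IsNarrowPSet Θ P D)
    (hA : (C ∩ D).Infinite) (hB : (Cᶜ ∩ Dᶜ).Infinite) : IsNarrowPSet Θ P (C ∩ D) := by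
  obtain ⟨⟨-, -, hCfin, hCP⟩, hCk⟩ := hC
  obtain ⟨⟨-, -, hDfin, hDP⟩, hDk⟩ := hD
  have hfin := hCfin.union hDfin
  have hP := hunion _ _ hCfin hDfin hCP hDP
  have hAP : IsPSet Θ P (C ∩ D) :=
    ⟨hA, hB.mono fun z hz hzA => hz.1 hzA.1, hfin.subset cutBdry_inter_subset,
      hsub _ _ hfin cutBdry_inter_subset hP⟩
  have hBP : IsPSet Θ P (Cᶜ ∩ Dᶜ) :=
    ⟨hB, hA.mono fun z hz hzB => hzB.1 hz.1, hfin.subset cutBdry_compl_inter_compl_subset,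
      hsub _ _ hfin cutBdry_compl_inter_compl_subset hP⟩
  have := ncard_cutBdry_inter_add_le hCfin hDfin
  have := minPBdry_le hAP
  have := minPBdry_le hBP
  exact ⟨hAP, by omega⟩

def Crossing (C D : Set V) : Prop :=
  (C ∩ D).Nonempty ∧ (C ∩ Dᶜ).Nonempty ∧ (Cᶜ ∩ D).Nonempty ∧ (Cᶜ ∩ Dᶜ).Nonempty

lemma not_crossing_iff_nested : ¬Crossing C D ↔ Nested C D := by
  simp only [Crossing, Nested, Set.Nonempty, mem_inter_iff, mem_compl_iff, subset_def]
  grind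

lemma Crossing.symm (h : Crossing C D) : Crossing D C := by
  simp only [Crossing, inter_comm D, inter_comm Dᶜ] at h ⊢
  tauto

lemma crossing_compl_left : Crossing Cᶜ D ↔ Crossing C D := by
  simp only [Crossing, compl_compl]
  tauto

lemma crossing_compl_right : Crossing C Dᶜ ↔ Crossing C D := by
  simp only [Crossing, compl_compl]
  tauto

lemma not_crossing_of_subset (h : C ⊆ D) : ¬Crossing C D :=
  fun hCD => inter_compl_nonempty_iff.1 hCD.2.1 h

lemma not_crossing_of_subset_compl (h : C ⊆ Dᶜ) : ¬Crossing C D :=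
  fun hCD => not_crossing_of_subset h (crossing_compl_right.2 hCD)

lemma Crossing.ne (h : Crossing C D) : C ≠ D := by
  rintro rfl
  exact not_crossing_of_subset subset_rfl h

lemma Crossing.of_inter {E : Set V} (hB : (Cᶜ ∩ Dᶜ).Nonempty) (h : Crossing (C ∩ D) E) :
    Crossing C E ∨ Crossing D E := by
  simp only [Crossing, Set.Nonempty, mem_inter_iff, mem_compl_iff] at *
  grind

lemma Crossing.of_inter_of_compl_inter {E : Set V} (hA : Crossing (C ∩ D) E)
    (hB : Crossing (Cᶜ ∩ Dᶜ) E) : Crossing C E ∧ Crossing D E := by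
  simp only [Crossing, Set.Nonempty, mem_inter_iff, mem_compl_iff] at *
  grind

lemma infinite_corners (hC : C.Infinite) (hCc : Cᶜ.Infinite) (hD : D.Infinite)
    (hDc : Dᶜ.Infinite) :
    (C ∩ D).Infinite ∧ (Cᶜ ∩ Dᶜ).Infinite ∨ (C ∩ Dᶜ).Infinite ∧ (Cᶜ ∩ D).Infinite := by
  rw [← inter_union_compl C D, infinite_union] at hC
  rw [← inter_union_compl Cᶜ D, infinite_union] at hCc
  rw [← inter_union_compl D C, infinite_union, inter_comm D, inter_comm D] at hD
  rw [← inter_union_compl Dᶜ C, infinite_union, inter_comm Dᶜ, inter_comm Dᶜ] at hDc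
  tauto

section Crossers

variable (Θ P)

def crossers (C : Set V) : Set (Set V) := {D | IsNarrowPSet Θ P D ∧ Crossing C D}

end Crossers

lemma crossers_compl : crossers Θ P Cᶜ = crossers Θ P C := by
  simp only [crossers, crossing_compl_left]

lemma exists_mem_cutBdry_mem_of_sideConnected (hD : SideConnected Θ D)
    (hCD : (C ∩ D).Nonempty) (hCcD : (Cᶜ ∩ D).Nonempty) :
    ∃ e ∈ cutBdry Θ C, ∃ a ∈ e, a ∈ D := by
  obtain ⟨p, hpC, hpD⟩ := hCD
  obtain ⟨q, hqC, hqD⟩ := hCcD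
  by_contra! hnone
  refine hqC ((hD hpD hqD).mem_and_reachable_of_closed (G₂ := Θ) (T := C ∩ D)
    (fun a b hab ⟨haC, haD⟩ => ?_) ⟨hpC, hpD⟩).1.1
  have hbD := mem_of_reachable_deleteEdges_cutBdry haD hab.reachable
  have hab := ((deleteEdges_adj ..).1 hab).1
  refine ⟨⟨?_, hbD⟩, hab⟩
  by_contra hbC
  exact hnone _ (mk_mem_cutBdry hab haC hbC) a (Sym2.mem_mk_left a b) haD

/-- Both sides of a narrow set crossing `C` are connected, so each contains an endpoint of an
edge of `∂C`: the crossing set is a tight separator of two such endpoints. -/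
lemma crossers_finite (hconn : Θ.Connected)
    (hsub : ∀ F F' : Set (Sym2 V), F.Finite → F' ⊆ F → P F → P F')
    (hC : IsNarrowPSet Θ P C) : (crossers Θ P C).Finite := by
  classical
  have hW : (⋃ e ∈ cutBdry Θ C, (e.toFinset : Set V)).Finite :=
    hC.1.2.2.1.biUnion fun e _ => e.toFinset.finite_toSet
  refine (hW.biUnion fun a _ => hW.biUnion fun b _ =>
    finite_tightSeparators (minPBdry Θ P) hconn a b).subset ?_
  rintro D ⟨hD, hCD⟩
  obtain ⟨e, he, a, hae, haD⟩ :=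
    exists_mem_cutBdry_mem_of_sideConnected (hD.sideConnected hconn hsub) hCD.1 hCD.2.2.1
  obtain ⟨e', he', b, hbe', hbD⟩ := exists_mem_cutBdry_mem_of_sideConnected
    (hD.compl.sideConnected hconn hsub) hCD.2.1 hCD.2.2.2
  exact mem_biUnion (mem_biUnion he (Sym2.mem_toFinset.2 hae))
    (mem_biUnion (mem_biUnion he' (Sym2.mem_toFinset.2 hbe'))
      ⟨haD, hbD, ⟨hD.sideConnected hconn hsub, hD.compl.sideConnected hconn hsub⟩,
        hD.1.2.2.1, hD.2.le⟩)

lemma crossers_inter_union_subset (hcr : Crossing C D) :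
    crossers Θ P (C ∩ D) ∪ crossers Θ P (Cᶜ ∩ Dᶜ) ⊆ crossers Θ P C ∪ crossers Θ P D := by
  rintro E (⟨hE, hAE⟩ | ⟨hE, hBE⟩)
  · exact (hAE.of_inter hcr.2.2.2).imp (⟨hE, ·⟩) (⟨hE, ·⟩)
  · have hA : (Cᶜᶜ ∩ Dᶜᶜ).Nonempty := by rw [compl_compl, compl_compl]; exact hcr.1
    exact (hBE.of_inter hA).imp (⟨hE, crossing_compl_left.1 ·⟩) (⟨hE, crossing_compl_left.1 ·⟩)

lemma crossers_inter_inter_subset :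
    crossers Θ P (C ∩ D) ∩ crossers Θ P (Cᶜ ∩ Dᶜ) ⊆ crossers Θ P C ∩ crossers Θ P D := by
  rintro E ⟨⟨hE, hAE⟩, -, hBE⟩
  obtain ⟨hCE, hDE⟩ := hAE.of_inter_of_compl_inter hBE
  exact ⟨⟨hE, hCE⟩, hE, hDE⟩

/-- The corners are crossed only by sets crossing `C` or `D`, and not by `C` and `D`
themselves. -/
lemma ncard_crossers_corners_add_two_le (hconn : Θ.Connected)
    (hsub : ∀ F F' : Set (Sym2 V), F.Finite → F' ⊆ F → P F → P F')
    (hC : IsNarrowPSet Θ P C) (hD : IsNarrowPSet Θ P D) (hcr : Crossing C D)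
    (hA : IsNarrowPSet Θ P (C ∩ D)) (hB : IsNarrowPSet Θ P (Cᶜ ∩ Dᶜ)) :
    (crossers Θ P (C ∩ D)).ncard + (crossers Θ P (Cᶜ ∩ Dᶜ)).ncard + 2 ≤
      (crossers Θ P C).ncard + (crossers Θ P D).ncard := by
  have hAfin := crossers_finite hconn hsub hA
  have hBfin := crossers_finite hconn hsub hB
  have hCDfin := (crossers_finite hconn hsub hC).union (crossers_finite hconn hsub hD)
  have hdisj : Disjoint (crossers Θ P (C ∩ D) ∪ crossers Θ P (Cᶜ ∩ Dᶜ)) {C, D} := by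
    refine disjoint_right.2 ?_
    rintro E (rfl | rfl) (⟨-, h⟩ | ⟨-, h⟩)
    · exact not_crossing_of_subset inter_subset_left h
    · exact not_crossing_of_subset_compl inter_subset_left h
    · exact not_crossing_of_subset inter_subset_right h
    · exact not_crossing_of_subset_compl inter_subset_right h
  have hpair : {C, D} ⊆ crossers Θ P C ∪ crossers Θ P D := by
    rintro E (rfl | rfl)
    exacts [Or.inr ⟨hC, hcr.symm⟩, Or.inl ⟨hD, hcr⟩]
  have hunion := ncard_le_ncard (union_subset (crossers_inter_union_subset hcr) hpair) hCDfin
  rw [ncard_union_eq hdisj (hAfin.union hBfin), ncard_pair hcr.ne] at hunion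
  have hinter := ncard_le_ncard (crossers_inter_inter_subset (Θ := Θ) (P := P) (C := C) (D := D))
    ((crossers_finite hconn hsub hC).inter_of_left _)
  have := ncard_union_add_ncard_inter _ _ hAfin hBfin
  have := ncard_union_add_ncard_inter _ _ (crossers_finite hconn hsub hC)
    (crossers_finite hconn hsub hD)
  omega

/-- If `C` crossed `D`, two opposite corners would be infinite, hence narrow, and one of them
would be crossed by fewer narrow sets than `C`. -/
lemma not_crossing_of_minimalFor (hconn : Θ.Connected)
    (hsub : ∀ F F' : Set (Sym2 V), F.Finite → F' ⊆ F → P F → P F')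
    (hunion : ∀ F F' : Set (Sym2 V), F.Finite → F'.Finite → P F → P F' → P (F ∪ F'))
    (hC : MinimalFor (IsNarrowPSet Θ P) (fun E => (crossers Θ P E).ncard) C)
    (hD : IsNarrowPSet Θ P D) (hDC : (crossers Θ P D).ncard ≤ (crossers Θ P C).ncard) :
    ¬Crossing C D := by
  have key : ∀ D', IsNarrowPSet Θ P D' → Crossing C D' →
      (crossers Θ P D').ncard ≤ (crossers Θ P C).ncard →
      (C ∩ D').Infinite → (Cᶜ ∩ D'ᶜ).Infinite → False := by
    intro D' hD' hcr hle hA hB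
    have hNA := hC.1.inter hsub hunion hD' hA hB
    have hNB := hC.1.compl.inter hsub hunion hD'.compl hB (by rwa [compl_compl, compl_compl])
    have := ncard_crossers_corners_add_two_le hconn hsub hC.1 hD' hcr hNA hNB
    have := hC.le hNA
    have := hC.le hNB
    omega
  intro hcr
  rcases infinite_corners hC.1.1.1 hC.1.1.2.1 hD.1.1 hD.1.2.1 with ⟨hA, hB⟩ | ⟨hA, hB⟩
  · exact key D hD hcr hDC hA hB
  · exact key Dᶜ hD.compl (crossing_compl_right.2 hcr) (by rwa [crossers_compl]) hA
      (by rwa [compl_compl])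

section Automorphisms

variable (f : Θ ≃g Θ)

lemma cutBdry_image : cutBdry Θ (f '' X) = Sym2.map f '' cutBdry Θ X := by
  ext e
  induction e using Sym2.ind with | _ u v => ?_
  obtain ⟨u, rfl⟩ := f.surjective u
  obtain ⟨v, rfl⟩ := f.surjective v
  rw [mk_mem_cutBdry_iff, ← Sym2.map_mk, (Sym2.map.injective f.injective).mem_set_image,
    mk_mem_cutBdry_iff, f.map_adj_iff, f.injective.mem_set_image, f.injective.mem_set_image]

lemma IsNarrowPSet.image (hPf : ∀ F, F.Finite → P F → P (Sym2.map f '' F))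
    (hX : IsNarrowPSet Θ P X) : IsNarrowPSet Θ P (f '' X) := by
  obtain ⟨⟨hinf, hcinf, hfin, hP⟩, hk⟩ := hX
  refine ⟨⟨hinf.image f.injective.injOn, ?_, ?_, ?_⟩, ?_⟩
  · rw [← image_compl_eq f.bijective]
    exact hcinf.image f.injective.injOn
  · rw [cutBdry_image]
    exact hfin.image _
  · rw [cutBdry_image]
    exact hPf _ hfin hP
  · rw [cutBdry_image, ncard_image_of_injective _ (Sym2.map.injective f.injective), hk]

lemma Crossing.image (h : Crossing C D) : Crossing (f '' C) (f '' D) := by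
  simp only [Crossing, ← image_compl_eq f.bijective, ← image_inter f.injective, image_nonempty]
  exact h

lemma ncard_crossers_le_image (hconn : Θ.Connected)
    (hsub : ∀ F F' : Set (Sym2 V), F.Finite → F' ⊆ F → P F → P F')
    (hPf : ∀ F, F.Finite → P F → P (Sym2.map f '' F)) (hC : IsNarrowPSet Θ P C) :
    (crossers Θ P C).ncard ≤ (crossers Θ P (f '' C)).ncard := by
  rw [← ncard_image_of_injective _ (image_injective.2 f.injective)]
  refine ncard_le_ncard ?_ (crossers_finite hconn hsub (hC.image f hPf))
  rintro _ ⟨D, ⟨hD, hCD⟩, rfl⟩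
  exact ⟨hD.image f hPf, hCD.image f⟩

end Automorphisms

end Kroen

/-- (Krön; Theorem 2.4 of Hensel–Kielak.)  Let `Θ` be a connected graph with a
group `G` acting on it, and let `P` be a property of finite sets of edges which
is stable under the `G`-action, under subsets and under finite unions.  If some
set of cutting edges has `P`, then there is a cut `C` whose boundary has `P`,
which is nested with all its `G`-translates, and whose complement is also a
cut. -/
theorem kroen_equivariant_nested_cut
    {V : Type*} (Θ : SimpleGraph V) (hconn : Θ.Connected)
    {G : Type*} [Group G] [MulAction G V]
    -- `G` acts on `Θ` by graph automorphisms
    (hact : ∀ (g : G) (u v : V), Θ.Adj (g • u) (g • v) ↔ Θ.Adj u v)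
    (P : Set (Sym2 V) → Prop)
    -- `P` is stable under the `G`-action
    (hPact : ∀ (g : G) (F : Set (Sym2 V)), F.Finite → P F →
      P (Sym2.map (fun x => g • x) '' F))
    -- `P` is stable under subsets
    (hsub : ∀ F F' : Set (Sym2 V), F.Finite → F' ⊆ F → P F → P F')
    -- `P` is stable under finite unions
    (hunion : ∀ F F' : Set (Sym2 V), F.Finite → F'.Finite → P F → P F' → P (F ∪ F'))
    -- some set of cutting edges has `P`
    (hex : ∃ F : Set (Sym2 V), IsCuttingEdges Θ F ∧ P F) :
    ∃ C : Set V, IsCut Θ C ∧ P (cutBdry Θ C) ∧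
      (∀ g : G, Nested C ((fun x => g • x) '' C)) ∧
      IsCut Θ Cᶜ := by
  obtain ⟨F, hF, hPF⟩ := hex
  obtain ⟨X, hX⟩ := Kroen.exists_isPSet_of_isCuttingEdges hsub hF hPF
  obtain ⟨C₀, hC₀⟩ := hX.exists_isNarrowPSet
  obtain ⟨C, hC⟩ := exists_minimalFor_of_wellFoundedLT (Kroen.IsNarrowPSet Θ P)
    (fun E => (Kroen.crossers Θ P E).ncard) ⟨C₀, hC₀⟩
  refine ⟨C, hC.1.isCut hconn hsub, hC.1.1.2.2.2, fun g => ?_, hC.1.compl.isCut hconn hsub⟩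
  let act : G → Θ ≃g Θ := fun g => ⟨MulAction.toPerm g, hact g _ _⟩
  have hgC : Kroen.IsNarrowPSet Θ P (act g '' C) := hC.1.image (act g) (hPact g)
  have hle := Kroen.ncard_crossers_le_image (act g⁻¹) hconn hsub (hPact g⁻¹) hgC
  have hinv : ∀ x, act g⁻¹ (act g x) = x := inv_smul_smul g
  simp only [Set.image_image, hinv, Set.image_id'] at hle
  exact Kroen.not_crossing_iff_nested.1
    (Kroen.not_crossing_of_minimalFor hconn hsub hunion hC hgC hle)
end

section
/- Let ι be an index type with at least two elements and let (G_i)_{i ∈ ι} be a family of nontrivial groups. In the free product ∗_{i ∈ ι} G_i, for every index i the normalizer of the image of the canonical inclusion G_i → ∗_{i ∈ ι} G_i is equal to that image. (The normaliser of a free factor in a nontrivial free product is that free factor.) -/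
/-!
Let `A` be the image of `G i` and `x` an element of its normaliser. Multiplying `x` by an
element of `A` on either side keeps it in the normaliser and, if its reduced word begins or ends
with a letter from `G i`, shortens that word; so by induction on the length we may assume the
reduced word `w` of `x` begins and ends outside `G i`. If `w` were nonempty, then for `g ≠ 1` in
`G i` the word `w g w⁻¹` would already be reduced, of length at least three, so
`x (of g) x⁻¹ ∉ A`. Hence `x = 1`.
-/

namespace Monoid.CoprodI

section Monoid

variable {ι : Type*} {M : ι → Type*} [∀ i, Monoid (M i)]

theorem Word.prod_injective : Function.Injective (Word.prod : Word M → CoprodI M) := by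
  classical
  exact Word.equiv.symm.injective

theorem Word.equiv_prod [DecidableEq ι] [∀ i, DecidableEq (M i)] (w : Word M) :
    Word.equiv w.prod = w :=
  Word.equiv.apply_symm_apply w

theorem Word.exists_of_mul_of_length_lt [DecidableEq ι] [∀ i, DecidableEq (M i)] {i : ι}
    {x : CoprodI M} (hx : (Word.equiv x).fstIdx = some i) :
    ∃ (m : M i) (y : CoprodI M),
      x = of m * y ∧ (Word.equiv y).toList.length < (Word.equiv x).toList.length := by
  set p := Word.equivPair i (Word.equiv x)
  have hrcons : Word.rcons p = Word.equiv x := (Word.equivPair i).symm_apply_apply _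
  have hhead : p.head ≠ 1 := by
    intro h1
    rw [Word.rcons, dif_pos h1] at hrcons
    exact p.fstIdx_ne (hrcons ▸ hx)
  refine ⟨p.head, p.tail.prod, ?_, ?_⟩
  · rw [← Word.prod_rcons, hrcons]
    exact (Word.equiv.symm_apply_apply x).symm
  · rw [Word.equiv_prod, ← hrcons, Word.rcons, dif_neg hhead]
    simp [Word.cons]

namespace NeWord

theorem exists_prod_eq {x : CoprodI M} (hx : x ≠ 1) :
    ∃ (i j : ι) (w : NeWord M i j), w.prod = x := by
  classical
  have hx' : Word.equiv x ≠ Word.empty := fun h =>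
    hx (by rw [← Word.equiv.symm_apply_apply x, h]; rfl)
  obtain ⟨i, j, w, hw⟩ := of_word _ hx'
  exact ⟨i, j, w, by rw [NeWord.prod, hw]; exact Word.equiv.symm_apply_apply x⟩

theorem fstIdx_toWord {i j : ι} (w : NeWord M i j) : w.toWord.fstIdx = some i := by
  simp [Word.fstIdx, toWord]

theorem equiv_prod [DecidableEq ι] [∀ i, DecidableEq (M i)] {i j : ι} (w : NeWord M i j) :
    Word.equiv w.prod = w.toWord :=
  w.toWord.equiv_prod

theorem prod_ne_of {i j k : ι} (w : NeWord M i j) (hik : i ≠ k) (m : M k) : w.prod ≠ of m := by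
  intro h
  by_cases hm : m = 1
  · rw [hm, map_one, ← Word.prod_empty] at h
    exact w.toList_ne_nil (congrArg Word.toList (Word.prod_injective h))
  · rw [← prod_singleton m hm] at h
    have := congrArg Word.fstIdx (Word.prod_injective h)
    rw [fstIdx_toWord, fstIdx_toWord, Option.some_inj] at this
    exact hik this

end NeWord

end Monoid

section Group

variable {ι : Type*} {G : ι → Type*} [∀ i, Group (G i)]

theorem NeWord.length_toList_inv {i j : ι} (w : NeWord G i j) :
    w.inv.toList.length = w.toList.length := by
  induction w with
  | singleton => rfl
  | append _ _ _ ih₁ ih₂ => simp [inv, ih₁, ih₂, add_comm]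

theorem Word.length_equiv_inv [DecidableEq ι] [∀ i, DecidableEq (G i)] (x : CoprodI G) :
    (Word.equiv x⁻¹).toList.length = (Word.equiv x).toList.length := by
  by_cases hx : x = 1
  · rw [hx, inv_one]
  obtain ⟨i, j, w, rfl⟩ := NeWord.exists_prod_eq hx
  rw [← NeWord.inv_prod, NeWord.equiv_prod, NeWord.equiv_prod]
  exact w.length_toList_inv

theorem NeWord.conj_prod_ne_of {i j k : ι} (w : NeWord G j k) (hj : j ≠ i) (hk : k ≠ i)
    {g : G i} (hg : g ≠ 1) (g' : G i) : w.prod * of g * w.prod⁻¹ ≠ of g' := by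
  simpa using ((w.append hk (singleton g hg)).append hk.symm w.inv).prod_ne_of hj g'

theorem eq_one_of_mem_normalizer_range [DecidableEq ι] [∀ i, DecidableEq (G i)] {i : ι}
    [Nontrivial (G i)] {x : CoprodI G}
    (hx : x ∈ Subgroup.normalizer ((of : G i →* CoprodI G).range : Set (CoprodI G)))
    (hfst : (Word.equiv x).fstIdx ≠ some i) (hlast : (Word.equiv x⁻¹).fstIdx ≠ some i) :
    x = 1 := by
  by_contra hx1
  obtain ⟨j, k, w, rfl⟩ := NeWord.exists_prod_eq hx1
  have hj : j ≠ i := by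
    simpa [NeWord.equiv_prod, NeWord.fstIdx_toWord] using hfst
  have hk : k ≠ i := by
    simpa [← NeWord.inv_prod, NeWord.equiv_prod, NeWord.fstIdx_toWord] using hlast
  obtain ⟨g, hg⟩ := exists_ne (1 : G i)
  obtain ⟨g', hg'⟩ := (Subgroup.mem_normalizer_iff.mp hx (of g)).mp ⟨g, rfl⟩
  exact w.conj_prod_ne_of hj hk hg g' hg'.symm

end Group

end Monoid.CoprodI

open Monoid.CoprodI

theorem normalizer_of_free_factor_general
    {ι : Type*} (G : ι → Type*) [∀ i, Group (G i)]
    (hnt : ∀ i, Nontrivial (G i)) (i : ι) :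
    Subgroup.normalizer ((Monoid.CoprodI.of : G i →* Monoid.CoprodI G).range : Set (Monoid.CoprodI G)) =
      (Monoid.CoprodI.of : G i →* Monoid.CoprodI G).range := by
  classical
  refine le_antisymm (fun x hx => ?_) Subgroup.le_normalizer
  induction hn : (Word.equiv x).toList.length using Nat.strong_induction_on generalizing x with
  | _ n ih =>
  have hstrip : ∀ y ∈ Subgroup.normalizer ((of : G i →* Monoid.CoprodI G).range : Set _),
      (Word.equiv y).fstIdx = some i → (Word.equiv y).toList.length = n →
      y ∈ (of : G i →* Monoid.CoprodI G).range := by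
    intro y hy hfst hlen
    obtain ⟨g, z, rfl, hz⟩ := Word.exists_of_mul_of_length_lt hfst
    have hof : of g ∈ (of : G i →* Monoid.CoprodI G).range := ⟨g, rfl⟩
    have hzN := (Subgroup.mul_mem_cancel_left _ (Subgroup.le_normalizer hof)).mp hy
    exact mul_mem hof (ih _ (hlen ▸ hz) z hzN rfl)
  by_cases hfst : (Word.equiv x).fstIdx = some i
  · exact hstrip x hx hfst hn
  by_cases hlast : (Word.equiv x⁻¹).fstIdx = some i
  · exact inv_mem_iff.mp (hstrip x⁻¹ (inv_mem hx) hlast (Word.length_equiv_inv x ▸ hn))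
  have := hnt i
  rw [eq_one_of_mem_normalizer_range hx hfst hlast]
  exact one_mem _

/-- The normaliser of a free factor in a nontrivial free product is that free
factor: if `ι` has at least two elements and each group `G i` is nontrivial,
then in the free product `Monoid.CoprodI G` the normaliser of the image of the
canonical inclusion `G i → Monoid.CoprodI G` equals that image. -/
theorem normalizer_of_free_factor
    {ι : Type*} [Nontrivial ι] (G : ι → Type*) [∀ i, Group (G i)]
    (hnt : ∀ i, Nontrivial (G i)) (i : ι) :
    Subgroup.normalizer ((Monoid.CoprodI.of : G i →* Monoid.CoprodI G).range : Set (Monoid.CoprodI G)) =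
      (Monoid.CoprodI.of : G i →* Monoid.CoprodI G).range :=
  normalizer_of_free_factor_general G hnt i
end

section
/- Let Θ be a connected simple graph and let 𝒫 be a property of finite sets of edges of Θ which is stable under passing to subsets, and suppose at least one 𝒫-cut exists. Then for every 𝒫-narrow cut C, the complement C* is also a cut, and the boundary of C* equals the boundary of C. -/
/-!
Let `C` be an infinite component of `Θ - F` and `B ⊆ F` its boundary. The component `D` of
`Θ - B` containing another infinite component of `Θ - F` is infinite and disjoint from `C`, so
`B` is again a set of cutting edges and `D` is a `P`-cut with `∂D ⊆ B`. Narrowness of `C` forces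
`∂D = B`; then every edge leaving `C` or `D` runs between them, so `C ∪ D` is closed under
adjacency, and connectedness of `Θ` gives `D = C*`.
-/

open SimpleGraph

section

variable {V : Type*} {G : SimpleGraph V} {S T : Set V} {F : Set (Sym2 V)}

lemma mk_mem_cutBdry {u v : V} : s(u, v) ∈ cutBdry G S ↔ G.Adj u v ∧ ¬(u ∈ S ↔ v ∈ S) := by
  constructor
  · rintro ⟨hadj, x, y, hxy, hx, hy⟩
    refine ⟨hadj, ?_⟩
    rcases Sym2.eq_iff.1 hxy with ⟨rfl, rfl⟩ | ⟨rfl, rfl⟩ <;> tauto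
  · rintro ⟨hadj, huv⟩
    by_cases hu : u ∈ S
    · exact ⟨hadj, u, v, rfl, hu, by tauto⟩
    · exact ⟨hadj, v, u, Sym2.eq_swap, by tauto, hu⟩

lemma cutBdry_compl (G : SimpleGraph V) (S : Set V) : cutBdry G Sᶜ = cutBdry G S := by
  ext e
  induction e using Sym2.ind with
  | _ u v => simp only [mk_mem_cutBdry, Set.mem_compl_iff, not_iff_not]

lemma mem_of_reachable_deleteEdges_cutBdry {u v : V}
    (h : (G.deleteEdges (cutBdry G S)).Reachable u v) (hu : u ∈ S) : v ∈ S := by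
  by_contra hv
  obtain ⟨p⟩ := h
  obtain ⟨d, -, hd₁, hd₂⟩ := p.exists_boundary_dart S hu hv
  have hadj := d.adj
  rw [deleteEdges_adj, mk_mem_cutBdry] at hadj
  exact hadj.2 ⟨hadj.1, by tauto⟩

lemma SimpleGraph.Preconnected.eq_univ_of_cutBdry_eq_empty (hG : G.Preconnected)
    (hS : S.Nonempty) (h : cutBdry G S = ∅) : S = Set.univ := by
  obtain ⟨c, hc⟩ := hS
  refine Set.eq_univ_of_forall fun x => mem_of_reachable_deleteEdges_cutBdry (G := G) ?_ hc
  rw [h, deleteEdges_empty]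
  exact hG c x

lemma SimpleGraph.Preconnected.eq_compl_of_cutBdry_eq (hG : G.Preconnected) (hS : S.Nonempty)
    (hTS : T ⊆ Sᶜ) (h : cutBdry G T = cutBdry G S) : T = Sᶜ := by
  have hunion : cutBdry G (S ∪ T) = ∅ := by
    refine Set.eq_empty_of_forall_notMem fun e => ?_
    induction e using Sym2.ind with
    | _ u v =>
      have huv := Set.ext_iff.1 h s(u, v)
      have hu := @hTS u
      have hv := @hTS v
      simp only [mk_mem_cutBdry, Set.mem_union, Set.mem_compl_iff] at huv hu hv ⊢
      tauto
  have hcover := hG.eq_univ_of_cutBdry_eq_empty (hS.mono Set.subset_union_left) hunion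
  exact hTS.antisymm fun x hx => (Set.eq_univ_iff_forall.1 hcover x).resolve_left hx

lemma SimpleGraph.ConnectedComponent.cutBdry_supp_subset
    (K : (G.deleteEdges F).ConnectedComponent) : cutBdry G K.supp ⊆ F := by
  intro e he
  induction e using Sym2.ind with
  | _ u v =>
    rw [mk_mem_cutBdry] at he
    by_contra hF
    exact he.2 (K.mem_supp_congr_adj ((deleteEdges_adj ..).2 ⟨he.1, hF⟩))

lemma SimpleGraph.ConnectedComponent.supp_subset_supp_mk_of_le {G' : SimpleGraph V}
    (hle : G ≤ G') (K : G.ConnectedComponent) {c : V} (hc : c ∈ K.supp) :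
    K.supp ⊆ (G'.connectedComponentMk c).supp := fun _ hx =>
  ConnectedComponent.sound ((K.reachable_of_mem_supp hx hc).mono hle)

lemma SimpleGraph.ConnectedComponent.supp_mk_deleteEdges_cutBdry
    (K : (G.deleteEdges F).ConnectedComponent) {c : V} (hc : c ∈ K.supp) :
    ((G.deleteEdges (cutBdry G K.supp)).connectedComponentMk c).supp = K.supp := by
  refine Set.Subset.antisymm (fun x hx => ?_) ?_
  · exact mem_of_reachable_deleteEdges_cutBdry (ConnectedComponent.exact hx).symm hc
  · exact K.supp_subset_supp_mk_of_le (deleteEdges_anti K.cutBdry_supp_subset) hc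

lemma isCuttingEdges_of_ne (hfin : F.Finite) (hsub : F ⊆ G.edgeSet)
    {K L : (G.deleteEdges F).ConnectedComponent} (hKL : K ≠ L)
    (hK : K.supp.Infinite) (hL : L.supp.Infinite) : IsCuttingEdges G F :=
  ⟨hfin, hsub, fun hconn => hKL (hconn.preconnected.subsingleton_connectedComponent.elim K L),
    K, L, hKL, hK, hL⟩

lemma IsCuttingEdges.exists_ne_infinite (hF : IsCuttingEdges G F)
    (K : (G.deleteEdges F).ConnectedComponent) :
    ∃ L : (G.deleteEdges F).ConnectedComponent, L ≠ K ∧ L.supp.Infinite := by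
  obtain ⟨-, -, -, K₀, L₀, hne, hK₀, hL₀⟩ := hF
  by_cases h : K₀ = K
  · exact ⟨L₀, h ▸ hne.symm, hL₀⟩
  · exact ⟨K₀, h, hK₀⟩

lemma IsCuttingEdges.exists_infinite_supp_subset_compl (hF : IsCuttingEdges G F)
    (K : (G.deleteEdges F).ConnectedComponent) :
    ∃ D : (G.deleteEdges (cutBdry G K.supp)).ConnectedComponent,
      D.supp.Infinite ∧ D.supp ⊆ K.suppᶜ := by
  obtain ⟨L, hLK, hL⟩ := hF.exists_ne_infinite K
  obtain ⟨d, hd⟩ := hL.nonempty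
  refine ⟨_, hL.mono (L.supp_subset_supp_mk_of_le (deleteEdges_anti K.cutBdry_supp_subset) hd),
    fun x hx hxK => hLK ?_⟩
  have hdK : d ∈ K.supp :=
    mem_of_reachable_deleteEdges_cutBdry (ConnectedComponent.exact hx) hxK
  rw [ConnectedComponent.mem_supp_iff] at hd hdK
  exact hd.symm.trans hdK

lemma IsCuttingEdges.isCuttingEdges_cutBdry (hF : IsCuttingEdges G F)
    (K : (G.deleteEdges F).ConnectedComponent) (hK : K.supp.Infinite) :
    IsCuttingEdges G (cutBdry G K.supp) := by
  obtain ⟨c, hc⟩ := hK.nonempty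
  obtain ⟨D, hD, hDK⟩ := hF.exists_infinite_supp_subset_compl K
  have hK' := K.supp_mk_deleteEdges_cutBdry hc
  refine isCuttingEdges_of_ne (hF.1.subset K.cutBdry_supp_subset) (fun e he => he.1)
    (fun h => ?_) (hK'.symm ▸ hK) hD
  obtain ⟨x, hx⟩ := hD.nonempty
  exact hDK hx (hK' ▸ h ▸ hx)

end

theorem pNarrow_compl_isCut_general
    {V : Type*} (Θ : SimpleGraph V) (hconn : Θ.Connected)
    (P : Set (Sym2 V) → Prop)
    (hsub : ∀ F F' : Set (Sym2 V), F.Finite → F' ⊆ F → P F → P F')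
    (C : Set V) (hC : IsPNarrow Θ P C) :
    IsCut Θ Cᶜ ∧ cutBdry Θ Cᶜ = cutBdry Θ C := by
  obtain ⟨⟨⟨F, hF, K, hK, rfl⟩, hPK⟩, hmin⟩ := hC
  have hB := hF.isCuttingEdges_cutBdry K hK
  obtain ⟨D, hD, hDK⟩ := hF.exists_infinite_supp_subset_compl K
  have hDB : cutBdry Θ D.supp ⊆ cutBdry Θ K.supp := D.cutBdry_supp_subset
  have hDP : IsPCut Θ P D.supp := ⟨⟨_, hB, D, hD, rfl⟩, hsub _ _ hB.1 hDB hPK⟩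
  have hDeq : cutBdry Θ D.supp = cutBdry Θ K.supp :=
    Set.eq_of_subset_of_ncard_le hDB (hmin _ hDP) hB.1
  have hDcompl := hconn.preconnected.eq_compl_of_cutBdry_eq hK.nonempty hDK hDeq
  exact ⟨⟨_, hB, D, hD, hDcompl.symm⟩, cutBdry_compl Θ K.supp⟩

/-- For a subset-closed property `P` of finite edge sets of a connected graph
admitting at least one `P`-cut, the complement of any `P`-narrow cut is again a
cut, with the same boundary. -/
theorem pNarrow_compl_isCut
    {V : Type*} (Θ : SimpleGraph V) (hconn : Θ.Connected)
    (P : Set (Sym2 V) → Prop)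
    (hsub : ∀ F F' : Set (Sym2 V), F.Finite → F' ⊆ F → P F → P F')
    (hex : ∃ C : Set V, IsPCut Θ P C)
    (C : Set V) (hC : IsPNarrow Θ P C) :
    IsCut Θ Cᶜ ∧ cutBdry Θ Cᶜ = cutBdry Θ C :=
  pNarrow_compl_isCut_general Θ hconn P hsub C hC
end

section
/- Let Θ be a connected simple graph and let 𝒫 be a property of finite sets of edges of Θ which is stable under passing to subsets, and suppose at least one 𝒫-cut exists. Then for every edge e of Θ, there are only finitely many 𝒫-narrow cuts whose boundary contains e. -/
/-!
All 𝒫-narrow cuts through `e = s(x, y)` have boundaries of one size `n`, and each such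
boundary `B` separates `x` from `y` into two infinite components of `Θ − B`, one of which is the
cut. Infinitely many such cuts therefore give infinitely many such boundaries, and the Δ-system
lemma yields an infinite sunflower of them whose kernel `Y` has fewer than `n` edges. An
`x`–`y` walk avoiding `Y` would need an edge from each of the infinitely many petals, which are
disjoint outside `Y`; so `Y` still separates `x` from `y`, and the component of `x` in `Θ − Y`
is a 𝒫-cut (𝒫 passes from a petal to `Y`) with fewer than `n` boundary edges.
-/

section Sunflower

variable {α : Type*}

theorem exists_infinite_pairwiseDisjoint_subset {𝔅 : Set (Finset α)} (h𝔅 : 𝔅.Infinite)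
    (hmem : ∀ a, {B ∈ 𝔅 | a ∈ B}.Finite) :
    ∃ 𝔖 ⊆ 𝔅, 𝔖.Infinite ∧ 𝔖.PairwiseDisjoint id := by
  classical
  let r : Finset α → Finset α → Prop := fun B B' => B ≠ B' ∧ Disjoint B B'
  have : Std.Symm r := ⟨fun _ _ h => ⟨h.1.symm, h.2.symm⟩⟩
  -- Greedy choice: the members of a finite subfamily meet only finitely many members of `𝔅`.
  obtain ⟨f, hf𝔅, hf⟩ := exists_seq_of_forall_finset_exists' (· ∈ 𝔅) r fun s _ => by
    have hbad : (↑s ∪ ⋃ a ∈ s.biUnion id, {B ∈ 𝔅 | a ∈ B}).Finite :=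
      s.finite_toSet.union ((s.biUnion id).finite_toSet.biUnion fun a _ => hmem a)
    obtain ⟨B, hB𝔅, hBbad⟩ := (h𝔅.sdiff hbad).nonempty
    refine ⟨B, hB𝔅, fun B' hB' => ⟨?_, Finset.disjoint_left.mpr fun a haB' haB => ?_⟩⟩
    · rintro rfl
      exact hBbad (Or.inl hB')
    · exact hBbad (Or.inr (Set.mem_biUnion (Finset.mem_biUnion.mpr ⟨B', hB', haB'⟩) ⟨hB𝔅, haB⟩))
  refine ⟨Set.range f, Set.range_subset_iff.mpr hf𝔅,
    Set.infinite_range_of_injective fun m n hmn => by_contra fun hne => (hf hne).1 hmn, ?_⟩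
  rintro _ ⟨m, rfl⟩ _ ⟨n, rfl⟩ hne
  exact (hf fun hmn => hne (congrArg f hmn)).2

theorem exists_infinite_sunflower [DecidableEq α] (n : ℕ) {𝔅 : Set (Finset α)}
    (h𝔅 : 𝔅.Infinite) (hcard : ∀ B ∈ 𝔅, B.card ≤ n) :
    ∃ Y : Finset α, ∃ 𝔖 ⊆ 𝔅, 𝔖.Infinite ∧ 𝔖.Pairwise fun B B' => B ∩ B' = Y := by
  induction n generalizing 𝔅 with
  | zero =>
    refine absurd ((Set.finite_singleton ∅).subset fun B hB => ?_) h𝔅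
    exact Finset.card_eq_zero.mp (Nat.le_zero.mp (hcard B hB))
  | succ n ih =>
    by_cases hmem : ∀ a, {B ∈ 𝔅 | a ∈ B}.Finite
    · obtain ⟨𝔖, h𝔖𝔅, h𝔖, hdisj⟩ := exists_infinite_pairwiseDisjoint_subset h𝔅 hmem
      exact ⟨∅, 𝔖, h𝔖𝔅, h𝔖, fun B hB B' hB' hne =>
        Finset.disjoint_iff_inter_eq_empty.mp (hdisj hB hB' hne)⟩
    obtain ⟨a, ha⟩ : ∃ a, {B ∈ 𝔅 | a ∈ B}.Infinite := not_forall.mp hmem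
    -- Remove the common element `a`, apply induction, and put `a` back into the kernel.
    set 𝔄 := {B ∈ 𝔅 | a ∈ B}
    have hinj : 𝔄.InjOn (Finset.erase · a) := (Finset.erase_injOn' a).mono fun B hB => hB.2
    obtain ⟨Y, 𝔖', h𝔖'𝔄, h𝔖', hY⟩ := ih (ha.image hinj) <| by
      rintro _ ⟨B, hB, rfl⟩
      rw [Finset.card_erase_of_mem hB.2]
      exact Nat.sub_le_of_le_add (hcard B hB.1)
    refine ⟨insert a Y, {B ∈ 𝔄 | B.erase a ∈ 𝔖'}, fun B hB => hB.1.1, ?_, ?_⟩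
    · refine Set.Infinite.of_image (Finset.erase · a) (h𝔖'.mono ?_)
      intro B' hB'
      obtain ⟨B, hB, rfl⟩ := h𝔖'𝔄 hB'
      exact ⟨B, ⟨hB, hB'⟩, rfl⟩
    · rintro B ⟨hB, hB𝔖⟩ B' ⟨hB', hB'𝔖⟩ hne
      have := hY hB𝔖 hB'𝔖 fun h => hne (hinj hB hB' h)
      ext z
      by_cases hz : z = a
      · simp [hz, hB.2, hB'.2]
      · simp [← this, hz]

end Sunflower

section CutLemmas

open SimpleGraph

variable {V : Type*} {Θ : SimpleGraph V} {P : Set (Sym2 V) → Prop} {C : Set V} {x y : V}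

theorem mk_mem_cutBdry_iff : s(x, y) ∈ cutBdry Θ C ↔ Θ.Adj x y ∧ (x ∈ C ↔ y ∉ C) := by
  constructor
  · rintro ⟨he, u, v, huv, hu, hv⟩
    rcases Sym2.eq_iff.mp huv with ⟨rfl, rfl⟩ | ⟨rfl, rfl⟩ <;> exact ⟨he, by tauto⟩
  · rintro ⟨hxy, hC⟩
    by_cases hx : x ∈ C
    · exact ⟨hxy, x, y, rfl, hx, hC.mp hx⟩
    · exact ⟨hxy, y, x, Sym2.eq_swap, by tauto, hx⟩

theorem cutBdry_subset_edgeSet : cutBdry Θ C ⊆ Θ.edgeSet := fun _ he => he.1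

theorem cutBdry_supp_subset {F : Set (Sym2 V)} (K : (Θ.deleteEdges F).ConnectedComponent) :
    cutBdry Θ K.supp ⊆ F := by
  rintro _ ⟨he, u, v, rfl, hu, hv⟩
  by_contra huv
  exact hv (K.mem_supp_of_adj_mem_supp hu (deleteEdges_adj.mpr ⟨he, huv⟩))

theorem supp_connectedComponentMk_mono {G H : SimpleGraph V} (h : G ≤ H) (v : V) :
    (G.connectedComponentMk v).supp ⊆ (H.connectedComponentMk v).supp := fun _ hu =>
  ConnectedComponent.sound ((ConnectedComponent.exact hu).mono h)

theorem supp_connectedComponentMk_deleteEdges_cutBdry_subset (hx : x ∈ C) :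
    ((Θ.deleteEdges (cutBdry Θ C)).connectedComponentMk x).supp ⊆ C := by
  intro v hv
  by_contra hvC
  obtain ⟨w⟩ := (ConnectedComponent.exact hv).symm
  obtain ⟨d, -, hd, hdC⟩ := w.exists_boundary_dart C hx hvC
  have hadj := deleteEdges_adj.mp d.adj
  exact hadj.2 (mk_mem_cutBdry_iff.mpr ⟨hadj.1, iff_of_true hd hdC⟩)

theorem IsCut.infinite (hC : IsCut Θ C) : C.Infinite := by
  obtain ⟨F, -, K, hK, rfl⟩ := hC
  exact hK

theorem IsCut.cutBdry_finite (hC : IsCut Θ C) : (cutBdry Θ C).Finite := by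
  obtain ⟨F, hF, K, -, rfl⟩ := hC
  exact hF.1.subset (cutBdry_supp_subset K)

theorem IsCut.supp_connectedComponentMk (hC : IsCut Θ C) (hx : x ∈ C) :
    ((Θ.deleteEdges (cutBdry Θ C)).connectedComponentMk x).supp = C := by
  refine (supp_connectedComponentMk_deleteEdges_cutBdry_subset hx).antisymm fun v hv => ?_
  obtain ⟨F, -, K, -, rfl⟩ := hC
  exact ConnectedComponent.sound
    ((K.reachable_of_mem_supp hv hx).mono (deleteEdges_anti (cutBdry_supp_subset K)))

theorem IsCut.exists_infinite_component_not_mem (hC : IsCut Θ C) :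
    ∃ w ∉ C, ((Θ.deleteEdges (cutBdry Θ C)).connectedComponentMk w).supp.Infinite := by
  obtain ⟨F, ⟨-, -, -, K₁, K₂, hK₁₂, hK₁, hK₂⟩, K, -, rfl⟩ := hC
  obtain ⟨K', hK'K, hK'⟩ : ∃ K', K' ≠ K ∧ K'.supp.Infinite := by
    by_cases h : K₁ = K
    · exact ⟨K₂, h ▸ hK₁₂.symm, hK₂⟩
    · exact ⟨K₁, h, hK₁⟩
  obtain ⟨w, hw⟩ := hK'.nonempty
  refine ⟨w, fun hwK => hK'K (hw.symm.trans hwK), hK'.mono fun v hv => ?_⟩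
  exact ConnectedComponent.sound
    ((K'.reachable_of_mem_supp hv hw).mono (deleteEdges_anti (cutBdry_supp_subset K)))

theorem isPCut_supp_connectedComponentMk
    (hsub : ∀ F F' : Set (Sym2 V), F.Finite → F' ⊆ F → P F → P F')
    {B : Set (Sym2 V)} (hB : B.Finite) (hBE : B ⊆ Θ.edgeSet) (hP : P B)
    (hxy : ¬ (Θ.deleteEdges B).Reachable x y)
    (hx : ((Θ.deleteEdges B).connectedComponentMk x).supp.Infinite)
    (hy : ((Θ.deleteEdges B).connectedComponentMk y).supp.Infinite) :
    IsPCut Θ P ((Θ.deleteEdges B).connectedComponentMk x).supp :=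
  ⟨⟨B, ⟨hB, hBE, fun hconn => hxy (hconn.preconnected x y), _, _,
      mt ConnectedComponent.exact hxy, hx, hy⟩, _, hx, rfl⟩,
    hsub B _ hB (cutBdry_supp_subset _) hP⟩

theorem IsPNarrow.infinite_and_not_reachable_of_mem_cutBdry
    (hsub : ∀ F F' : Set (Sym2 V), F.Finite → F' ⊆ F → P F → P F')
    (hC : IsPNarrow Θ P C) (hx : x ∈ C) (he : s(x, y) ∈ cutBdry Θ C) :
    ((Θ.deleteEdges (cutBdry Θ C)).connectedComponentMk y).supp.Infinite ∧
      ¬ (Θ.deleteEdges (cutBdry Θ C)).Reachable x y := by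
  obtain ⟨⟨hcut, hP⟩, hmin⟩ := hC
  set B := cutBdry Θ C
  set G := Θ.deleteEdges B
  have hCx : (G.connectedComponentMk x).supp = C := hcut.supp_connectedComponentMk hx
  obtain ⟨w, hwC, hw⟩ := hcut.exists_infinite_component_not_mem
  have hwx : ¬ G.Reachable w x := fun h => hwC (hCx ▸ ConnectedComponent.sound h)
  -- By minimality the component of `w` has all of `B` as boundary, so it contains `y`.
  have hM := isPCut_supp_connectedComponentMk hsub hcut.cutBdry_finite cutBdry_subset_edgeSet hP
    hwx hw (by rw [hCx]; exact hcut.infinite)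
  have hMB : cutBdry Θ (G.connectedComponentMk w).supp = B :=
    Set.eq_of_subset_of_ncard_le (cutBdry_supp_subset _) (hmin _ hM) hcut.cutBdry_finite
  have hyw : G.connectedComponentMk y = G.connectedComponentMk w := by
    rw [← hMB, mk_mem_cutBdry_iff] at he
    by_contra hy
    exact hwx (ConnectedComponent.exact (he.2.mpr hy)).symm
  exact ⟨hyw ▸ hw, fun h => hwx (ConnectedComponent.exact (hyw ▸ ConnectedComponent.sound h)).symm⟩

theorem IsPNarrow.separates_of_mem_cutBdry
    (hsub : ∀ F F' : Set (Sym2 V), F.Finite → F' ⊆ F → P F → P F')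
    (hC : IsPNarrow Θ P C) (he : s(x, y) ∈ cutBdry Θ C) :
    ¬ (Θ.deleteEdges (cutBdry Θ C)).Reachable x y ∧
      ((Θ.deleteEdges (cutBdry Θ C)).connectedComponentMk x).supp.Infinite ∧
      ((Θ.deleteEdges (cutBdry Θ C)).connectedComponentMk y).supp.Infinite ∧
      (C = ((Θ.deleteEdges (cutBdry Θ C)).connectedComponentMk x).supp ∨
        C = ((Θ.deleteEdges (cutBdry Θ C)).connectedComponentMk y).supp) := by
  wlog hx : x ∈ C generalizing x y
  · have hy : y ∈ C := by
      have := (mk_mem_cutBdry_iff.mp he).2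
      tauto
    obtain ⟨hyx, hy', hx', hC'⟩ := this (Sym2.eq_swap ▸ he) hy
    exact ⟨fun h => hyx h.symm, hx', hy', hC'.symm⟩
  have hCx := hC.1.1.supp_connectedComponentMk hx
  obtain ⟨hy, hxy⟩ := hC.infinite_and_not_reachable_of_mem_cutBdry hsub hx he
  exact ⟨hxy, by rw [hCx]; exact hC.1.1.infinite, hy, Or.inl hCx.symm⟩

theorem not_reachable_deleteEdges_of_sunflower [DecidableEq V] {G : SimpleGraph V}
    {𝔖 : Set (Finset (Sym2 V))} {Y : Finset (Sym2 V)} (h𝔖 : 𝔖.Infinite)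
    (hY : 𝔖.Pairwise fun B B' => B ∩ B' = Y)
    (hsep : ∀ B ∈ 𝔖, ¬ (G.deleteEdges ↑B).Reachable x y) :
    ¬ (G.deleteEdges ↑Y).Reachable x y := by
  rintro ⟨w⟩
  have hpetal : ∀ B ∈ 𝔖, ∃ f ∈ (B : Set (Sym2 V)), f ∈ w.edges := fun B hB =>
    w.exists_mem_edges_of_not_reachable_deleteEdges fun h =>
      hsep B hB (h.mono (deleteEdges_mono (deleteEdges_le _)))
  have : Nonempty (Sym2 V) := ⟨s(x, x)⟩
  choose! g hgB hgw using hpetal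
  refine Set.infinite_of_injOn_mapsTo (t := {f | f ∈ w.edges}) (fun B hB B' hB' hBB' => ?_) hgw
    h𝔖 w.edges.finite_toSet
  by_contra hne
  have hgY : g B ∈ Y := hY hB hB' hne ▸ Finset.mem_inter.mpr ⟨hgB B hB, hBB' ▸ hgB B' hB'⟩
  exact (edgeSet_deleteEdges _ ▸ w.edges_subset_edgeSet (hgw B hB)).2 hgY

theorem exists_isPCut_ncard_lt_of_sunflower [DecidableEq V]
    (hsub : ∀ F F' : Set (Sym2 V), F.Finite → F' ⊆ F → P F → P F')
    {𝔖 : Set (Finset (Sym2 V))} {Y : Finset (Sym2 V)} {n : ℕ} (h𝔖 : 𝔖.Infinite)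
    (hY : 𝔖.Pairwise fun B B' => B ∩ B' = Y) (hcard : ∀ B ∈ 𝔖, B.card = n)
    (hsep : ∀ B ∈ 𝔖, ↑B ⊆ Θ.edgeSet ∧ P ↑B ∧ ¬ (Θ.deleteEdges ↑B).Reachable x y ∧
      ((Θ.deleteEdges ↑B).connectedComponentMk x).supp.Infinite ∧
      ((Θ.deleteEdges ↑B).connectedComponentMk y).supp.Infinite) :
    ∃ D, IsPCut Θ P D ∧ (cutBdry Θ D).ncard < n := by
  obtain ⟨B, hB, B', hB', hne⟩ := h𝔖.nontrivial
  have hYB : Y ⊂ B := hY hB hB' hne ▸ Finset.inter_subset_left.ssubset_of_ne fun h =>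
    hne (Finset.eq_of_subset_of_card_le (Finset.inter_eq_left.mp h)
      (by rw [hcard B hB, hcard B' hB']))
  have hYB' : (Y : Set (Sym2 V)) ⊆ B := Finset.coe_subset.mpr hYB.subset
  obtain ⟨hBE, hP, -, hx, hy⟩ := hsep B hB
  have hmono := supp_connectedComponentMk_mono (deleteEdges_anti (G := Θ) hYB')
  refine ⟨_, isPCut_supp_connectedComponentMk hsub Y.finite_toSet (hYB'.trans hBE)
    (hsub _ _ B.finite_toSet hYB' hP)
    (not_reachable_deleteEdges_of_sunflower h𝔖 hY fun B hB => (hsep B hB).2.2.1)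
    (hx.mono (hmono x)) (hy.mono (hmono y)), ?_⟩
  calc _ ≤ (Y : Set (Sym2 V)).ncard := Set.ncard_le_ncard (cutBdry_supp_subset _) Y.finite_toSet
    _ = Y.card := Set.ncard_coe_finset Y
    _ < B.card := Finset.card_lt_card hYB
    _ = n := hcard B hB

end CutLemmas

theorem finitely_many_pNarrow_cuts_through_edge_general
    {V : Type*} (Θ : SimpleGraph V)
    (P : Set (Sym2 V) → Prop)
    (hsub : ∀ F F' : Set (Sym2 V), F.Finite → F' ⊆ F → P F → P F')
    (e : Sym2 V) :
    {C : Set V | IsPNarrow Θ P C ∧ e ∈ cutBdry Θ C}.Finite := by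
  classical
  induction e using Sym2.ind with | _ x y => ?_
  set S := {C : Set V | IsPNarrow Θ P C ∧ s(x, y) ∈ cutBdry Θ C}
  by_contra hS
  obtain ⟨C₀, ⟨hC₀, -⟩⟩ := Set.Infinite.nonempty hS
  set 𝔅 := {B : Finset (Sym2 V) | ∃ C ∈ S, ↑B = cutBdry Θ C}
  -- Each boundary in `𝔅` comes from at most two cuts in `S`.
  have h𝔅 : 𝔅.Infinite := fun h𝔅 => hS <| (h𝔅.biUnion fun B _ => Set.toFinite
      {((Θ.deleteEdges ↑B).connectedComponentMk x).supp,
        ((Θ.deleteEdges ↑B).connectedComponentMk y).supp}).subset fun C hC => by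
    obtain ⟨B, hB⟩ := hC.1.1.1.cutBdry_finite.exists_finset_coe
    refine Set.mem_biUnion ⟨C, hC, hB⟩ ?_
    rw [hB]
    exact (hC.1.separates_of_mem_cutBdry hsub hC.2).2.2.2
  have hcard : ∀ B ∈ 𝔅, B.card = (cutBdry Θ C₀).ncard := by
    rintro B ⟨C, hC, hB⟩
    rw [← Set.ncard_coe_finset, hB]
    exact (hC.1.2 C₀ hC₀.1).antisymm (hC₀.2 C hC.1.1)
  obtain ⟨Y, 𝔖, h𝔖𝔅, h𝔖, hY⟩ := exists_infinite_sunflower _ h𝔅 fun B hB => (hcard B hB).le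
  obtain ⟨D, hD, hDcard⟩ := exists_isPCut_ncard_lt_of_sunflower hsub h𝔖 hY
    (fun B hB => hcard B (h𝔖𝔅 hB)) fun B hB => by
      obtain ⟨C, hC, hB⟩ := h𝔖𝔅 hB
      obtain ⟨hxy, hx, hy, -⟩ := hC.1.separates_of_mem_cutBdry hsub hC.2
      rw [hB]
      exact ⟨cutBdry_subset_edgeSet, hC.1.1.2, hxy, hx, hy⟩
  exact (hC₀.2 D hD).not_gt hDcard

/-- For a subset-closed property `P` of finite edge sets of a connected graph
admitting at least one `P`-cut, any given edge lies in the boundary of only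
finitely many `P`-narrow cuts. -/
theorem finitely_many_pNarrow_cuts_through_edge
    {V : Type*} (Θ : SimpleGraph V) (hconn : Θ.Connected)
    (P : Set (Sym2 V) → Prop)
    (hsub : ∀ F F' : Set (Sym2 V), F.Finite → F' ⊆ F → P F → P F')
    (hex : ∃ C : Set V, IsPCut Θ P C)
    (e : Sym2 V) (he : e ∈ Θ.edgeSet) :
    {C : Set V | IsPNarrow Θ P C ∧ e ∈ cutBdry Θ C}.Finite :=
  finitely_many_pNarrow_cuts_through_edge_general Θ P hsub e
end

section
/- Let Θ be a connected simple graph and let 𝒫 be a property of finite sets of edges of Θ which is stable under passing to subsets and under finite unions, and suppose at least one 𝒫-cut exists. For a 𝒫-narrow cut C, the number m(C) of 𝒫-narrow cuts which are not nested with C is finite; call C optimally nested if m(C) is minimal among all 𝒫-narrow cuts. Then any two optimally nested 𝒫-narrow cuts are nested with each other. -/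
/-!
A `P`-narrow cut `C` is tight: `C` and `C*` are the components of `Θ − ∂C`. Indeed an infinite
component `W ⊆ C*` of `Θ − ∂C` is a `P`-cut with `∂W ⊆ ∂C`, so narrowness forces `∂W = ∂C`, and
then connectedness of `Θ` gives `W = C*`.

Tight sets with at most `k` boundary edges that separate two vertices `u`, `v` are finitely many:
a fixed `u`–`v` walk meets each of their boundaries, and deleting an edge `f` of the walk turns a
tight set with `f` in its boundary into a tight set of `Θ − f` with at most `k - 1` boundary
edges. A narrow cut crossing `C` separates two endpoints of `∂C`, because a side avoiding all of
them is a connected set on one side of `C`; hence `m(C)` is finite.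

If optimally nested narrow cuts `a`, `b` crossed, pick the diagonal along which `a ∩ b` and
`a* ∩ b*` are infinite. Infinite components `X ⊆ a ∩ b` and `X' ⊆ a* ∩ b*` of `Θ − (∂a ∪ ∂b)` are
narrow by submodularity of boundary sizes. A narrow cut nested with `a` and `b` is nested with `X`
and `X'`, one crossing both `X` and `X'` crosses both `a` and `b`, and `a`, `b` cross each other
but neither `X` nor `X'`. Counting gives `m(X) + m(X') ≤ m(a) + m(b) - 2`, contradicting the
minimality of `m(a)` and `m(b)`.
-/

open Set SimpleGraph

theorem ncard_add_ncard_add_ncard_diff_le {α : Type*} {A A' B B' : Set α} (hB : B.Finite)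
    (hB' : B'.Finite) (hU : A ∪ A' ⊆ B ∪ B') (hI : A ∩ A' ⊆ B ∩ B') :
    A.ncard + A'.ncard + ((B ∪ B') \ (A ∪ A')).ncard ≤ B.ncard + B'.ncard := by
  have hBB' := hB.union hB'
  rw [← ncard_union_add_ncard_inter A A' (hBB'.subset (subset_union_left.trans hU))
    (hBB'.subset (subset_union_right.trans hU)), ← ncard_union_add_ncard_inter B B' hB hB']
  have := ncard_sdiff_add_ncard_of_subset hU hBB'
  have := ncard_le_ncard hI (hB.inter_of_left B')
  omega

theorem infinite_inter_or_infinite_inter_compl {α : Type*} {a b : Set α} (ha : a.Infinite)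
    (ha' : aᶜ.Infinite) (hb : b.Infinite) (hb' : bᶜ.Infinite) :
    ((a ∩ b).Infinite ∧ (aᶜ ∩ bᶜ).Infinite) ∨ ((a ∩ bᶜ).Infinite ∧ (aᶜ ∩ b).Infinite) := by
  have key (s t : Set α) (hs : s.Infinite) (h : ¬(s ∩ t).Infinite) : (s ∩ tᶜ).Infinite := by
    have := hs.sdiff (not_infinite.1 h)
    rwa [sdiff_self_inter, sdiff_eq] at this
  by_cases h : (a ∩ b).Infinite
  · by_cases h' : (aᶜ ∩ bᶜ).Infinite
    · exact .inl ⟨h, h'⟩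
    · refine .inr ⟨?_, by simpa using key aᶜ bᶜ ha' h'⟩
      simpa [inter_comm] using key bᶜ aᶜ hb' (by rwa [inter_comm])
  · exact .inr ⟨key a b ha h, by simpa [inter_comm] using key b a hb (by rwa [inter_comm])⟩

theorem finite_setOf_exists_mem_sym2 {V : Type*} {B : Set (Sym2 V)} (hB : B.Finite) :
    {z : V | ∃ e ∈ B, z ∈ e}.Finite := by
  classical
  refine (hB.biUnion fun e _ => e.toFinset.finite_toSet).subset ?_
  rintro z ⟨e, he, hz⟩
  exact mem_biUnion he (Sym2.mem_toFinset.2 hz)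

section Boundary

variable {V : Type*} {G : SimpleGraph V} {A B C W : Set V} {x y : V}

theorem mem_cutBdry_iff : s(x, y) ∈ cutBdry G C ↔ G.Adj x y ∧ ¬(x ∈ C ↔ y ∈ C) := by
  simp only [cutBdry, mem_ofPred_eq, mem_edgeSet, Sym2.eq_iff]
  constructor
  · rintro ⟨h, u, v, ⟨rfl, rfl⟩ | ⟨rfl, rfl⟩, hu, hv⟩ <;> tauto
  · rintro ⟨h, hxy⟩
    by_cases hx : x ∈ C
    · exact ⟨h, x, y, .inl ⟨rfl, rfl⟩, hx, by tauto⟩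
    · exact ⟨h, y, x, .inr ⟨rfl, rfl⟩, by tauto, hx⟩

theorem cutBdry_subset_edgeSet_s9 : cutBdry G C ⊆ G.edgeSet := fun _ he => he.1

theorem cutBdry_compl_s9 : cutBdry G Cᶜ = cutBdry G C := by
  ext ⟨x, y⟩
  simp only [mem_cutBdry_iff, mem_compl_iff]
  tauto

theorem cutBdry_inter_subset : cutBdry G (A ∩ B) ⊆ cutBdry G A ∪ cutBdry G B := by
  rintro ⟨x, y⟩
  simp only [mem_union, mem_cutBdry_iff, mem_inter_iff]
  tauto

theorem cutBdry_inter_cutBdry_subset {X X' : Set V} (hX : X ⊆ A ∩ B) (hX' : X' ⊆ Aᶜ ∩ Bᶜ) :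
    cutBdry G X ∩ cutBdry G X' ⊆ cutBdry G A ∩ cutBdry G B := by
  rintro ⟨x, y⟩
  have := @hX x; have := @hX y; have := @hX' x; have := @hX' y
  simp only [mem_inter_iff, mem_compl_iff, mem_cutBdry_iff] at *
  tauto

theorem cutBdry_deleteEdges (F : Set (Sym2 V)) :
    cutBdry (G.deleteEdges F) C = cutBdry G C \ F := by
  ext ⟨x, y⟩
  simp only [mem_cutBdry_iff, deleteEdges_adj, mem_sdiff]
  tauto

theorem mem_iff_mem_of_reachable {F : Set (Sym2 V)} (hC : cutBdry G C ⊆ F)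
    (h : (G.deleteEdges F).Reachable x y) : x ∈ C ↔ y ∈ C := by
  obtain ⟨w⟩ := h
  induction w with
  | nil => rfl
  | cons h _ ih =>
    rw [deleteEdges_adj] at h
    exact (not_not.1 fun hne => h.2 (hC (mem_cutBdry_iff.2 ⟨h.1, hne⟩))).trans ih

theorem SimpleGraph.Walk.exists_mem_edges_mem_cutBdry (w : G.Walk x y) (hx : x ∈ C) (hy : y ∉ C) :
    ∃ e ∈ w.edges, e ∈ cutBdry G C := by
  obtain ⟨d, hd, hd₁, hd₂⟩ := w.exists_boundary_dart C hx hy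
  exact ⟨d.edge, List.mem_map_of_mem hd, mem_cutBdry_iff.2 ⟨d.adj, by tauto⟩⟩

theorem SimpleGraph.Connected.cutBdry_nonempty (hconn : G.Connected) (hx : x ∈ C) (hy : y ∉ C) :
    (cutBdry G C).Nonempty :=
  let ⟨_, _, he⟩ := (hconn.preconnected x y).some.exists_mem_edges_mem_cutBdry hx hy
  ⟨_, he⟩

theorem eq_compl_of_cutBdry_eq (hconn : G.Connected) (hC : C.Nonempty) (hWC : W ⊆ Cᶜ)
    (h : cutBdry G W = cutBdry G C) : W = Cᶜ := by
  refine hWC.antisymm fun y hy => ?_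
  by_contra hyW
  obtain ⟨c, hc⟩ := hC
  obtain ⟨⟨p, q⟩, hpq⟩ := hconn.cutBdry_nonempty (C := Cᶜ ∩ Wᶜ) ⟨hy, hyW⟩ fun h => h.1 hc
  have hW := congrArg (s(p, q) ∈ ·) h
  have := @hWC p; have := @hWC q
  simp only [mem_cutBdry_iff, mem_inter_iff, mem_compl_iff, eq_iff_iff] at hpq hW this
  tauto

end Boundary

section Components

variable {V : Type*} {G G' : SimpleGraph V} {C S : Set V} {x y : V}

def IsComponent (G : SimpleGraph V) (S : Set V) : Prop :=
  ∃ K : G.ConnectedComponent, K.supp = S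

namespace IsComponent

theorem nonempty (h : IsComponent G S) : S.Nonempty := by
  obtain ⟨K, rfl⟩ := h
  exact K.nonempty_supp

theorem reachable (h : IsComponent G S) (hx : x ∈ S) (hy : y ∈ S) : G.Reachable x y := by
  obtain ⟨K, rfl⟩ := h
  exact K.reachable_of_mem_supp hx hy

theorem mem_iff_of_adj (h : IsComponent G S) (hxy : G.Adj x y) : x ∈ S ↔ y ∈ S := by
  obtain ⟨K, rfl⟩ := h
  exact K.mem_supp_congr_adj hxy

theorem eq_supp (h : IsComponent G S) (hx : x ∈ S) : S = (G.connectedComponentMk x).supp := by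
  obtain ⟨K, rfl⟩ := h
  rw [(ConnectedComponent.mem_supp_iff K x).1 hx]

theorem of_le (h : IsComponent G S) (hle : G ≤ G') (hS : ∀ ⦃x y⦄, G'.Adj x y → x ∈ S → y ∈ S) :
    IsComponent G' S := by
  obtain ⟨x, hx⟩ := h.nonempty
  refine ⟨G'.connectedComponentMk x, Subset.antisymm (fun y hy => ?_) fun y hy => ?_⟩
  · by_contra hyS
    obtain ⟨d, -, hd₁, hd₂⟩ :=
      (ConnectedComponent.exact hy).symm.some.exists_boundary_dart S hx hyS
    exact hd₂ (hS d.adj hd₁)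
  · exact ConnectedComponent.sound ((h.reachable hx hy).mono hle).symm

theorem cutBdry_subset {B : Set (Sym2 V)} (h : IsComponent (G.deleteEdges B) S) :
    cutBdry G S ⊆ B := by
  rintro ⟨x, y⟩ he
  rw [mem_cutBdry_iff] at he
  by_contra hB
  exact he.2 (h.mem_iff_of_adj ((deleteEdges_adj ..).2 ⟨he.1, hB⟩))

theorem subset_or_subset_compl (h : IsComponent G S)
    (hC : ∀ ⦃x y⦄, x ∈ S → y ∈ S → G.Adj x y → (x ∈ C ↔ y ∈ C)) : S ⊆ C ∨ S ⊆ Cᶜ := by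
  obtain ⟨x, hx⟩ := h.nonempty
  suffices hside : ∀ y ∈ S, (y ∈ C ↔ x ∈ C) by
    by_cases hxC : x ∈ C
    · exact .inl fun y hy => (hside y hy).2 hxC
    · exact .inr fun y hy hyC => hxC ((hside y hy).1 hyC)
  intro y hy
  by_contra hne
  obtain ⟨d, -, ⟨hd₁, hd₁'⟩, hd₂⟩ := (h.reachable hx hy).some.exists_boundary_dart
    {z | z ∈ S ∧ (z ∈ C ↔ x ∈ C)} ⟨hx, Iff.rfl⟩ fun h => hne h.2
  have hd₂S : d.snd ∈ S := (h.mem_iff_of_adj d.adj).1 hd₁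
  exact hd₂ ⟨hd₂S, (hC hd₁ hd₂S d.adj).symm.trans hd₁'⟩

end IsComponent

theorem exists_infinite_isComponent {Θ : SimpleGraph V} {B : Set (Sym2 V)} (hconn : Θ.Connected)
    (hB : B.Finite) (hS : S.Infinite) (hS' : Sᶜ.Nonempty) (hSB : cutBdry Θ S ⊆ B) :
    ∃ X ⊆ S, X.Infinite ∧ IsComponent (Θ.deleteEdges B) X := by
  by_contra! hfin
  set G := Θ.deleteEdges B
  have hsupp (x : V) (hx : x ∈ S) : (G.connectedComponentMk x).supp ⊆ S := fun y hy =>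
    (mem_iff_mem_of_reachable hSB (ConnectedComponent.exact hy).symm).1 hx
  -- every component of `G` inside `S` contains an endpoint of an edge of `B`
  have hcover : S ⊆ ⋃ z ∈ {z | ∃ e ∈ B, z ∈ e} ∩ S, (G.connectedComponentMk z).supp := by
    intro x hx
    obtain ⟨y, hy⟩ := hS'
    obtain ⟨e, he⟩ := hconn.cutBdry_nonempty (C := (G.connectedComponentMk x).supp)
      ConnectedComponent.connectedComponentMk_mem fun h => hy (hsupp x hx h)
    have heB := IsComponent.cutBdry_subset ⟨_, rfl⟩ he
    obtain ⟨-, p, q, rfl, hp, -⟩ := he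
    exact mem_biUnion ⟨⟨_, heB, Sym2.mem_mk_left p q⟩, hsupp x hx hp⟩
      ((ConnectedComponent.mem_supp_iff _ _).2 hp.symm)
  refine hS ((((finite_setOf_exists_mem_sym2 hB).inter_of_left S).biUnion fun z hz => ?_).subset
    hcover)
  exact not_infinite.1 fun hinf => hfin _ (hsupp z hz.2) hinf ⟨_, rfl⟩

end Components

section Tight

variable {V : Type*} {G : SimpleGraph V} {D : Set V} {u v : V}

def IsTight (G : SimpleGraph V) (D : Set V) : Prop :=
  IsComponent (G.deleteEdges (cutBdry G D)) D ∧ IsComponent (G.deleteEdges (cutBdry G D)) Dᶜ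

namespace IsTight

theorem deleteEdges (h : IsTight G D) {F : Set (Sym2 V)} (hF : F ⊆ cutBdry G D) :
    IsTight (G.deleteEdges F) D := by
  rwa [IsTight, cutBdry_deleteEdges, deleteEdges_deleteEdges, union_sdiff_cancel hF]

theorem isComponent_side (h : IsTight G D) {S : Set V} (hS : S = D ∨ S = Dᶜ) :
    IsComponent (G.deleteEdges (cutBdry G D)) S := by
  rcases hS with rfl | rfl
  exacts [h.1, h.2]

theorem reachable (h : IsTight G D) (hu : u ∈ D) (hv : v ∉ D) (hD : (cutBdry G D).Nonempty) :
    G.Reachable u v := by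
  obtain ⟨⟨x, y⟩, hxy⟩ := hD
  rw [mem_cutBdry_iff] at hxy
  have hle := G.deleteEdges_le (cutBdry G D)
  have hcross (x y : V) (hxy : G.Adj x y) (hx : x ∈ D) (hy : y ∉ D) : G.Reachable u v :=
    ((h.1.reachable hu hx).mono hle).trans (hxy.reachable.trans ((h.2.reachable hy hv).mono hle))
  by_cases hx : x ∈ D
  · exact hcross x y hxy.1 hx (by tauto)
  · exact hcross y x hxy.1.symm (by tauto) hx

theorem eq_supp_of_cutBdry_eq_empty (h : IsTight G D) (hu : u ∈ D) (hD : cutBdry G D = ∅) :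
    D = (G.connectedComponentMk u).supp := by
  have hcomp := h.1
  rw [hD, deleteEdges_empty] at hcomp
  exact hcomp.eq_supp hu

end IsTight

theorem finite_setOf_isTight (G : SimpleGraph V) (u v : V) (k : ℕ) :
    {D | IsTight G D ∧ (cutBdry G D).encard ≤ k ∧ u ∈ D ∧ v ∉ D}.Finite := by
  induction k generalizing G with
  | zero =>
    refine (finite_singleton (G.connectedComponentMk u).supp).subset ?_
    rintro D ⟨hD, hk, hu, -⟩
    exact hD.eq_supp_of_cutBdry_eq_empty hu (by simpa using hk)
  | succ k ih =>
    obtain ⟨E, hE, hEmeets⟩ : ∃ E : Set (Sym2 V), E.Finite ∧ ∀ D, IsTight G D → u ∈ D → v ∉ D →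
        (cutBdry G D).Nonempty → ∃ f ∈ E, f ∈ cutBdry G D := by
      by_cases huv : G.Reachable u v
      · obtain ⟨w⟩ := huv
        exact ⟨{f | f ∈ w.edges}, w.edges.finite_toSet,
          fun D _ hu hv _ => w.exists_mem_edges_mem_cutBdry hu hv⟩
      · exact ⟨∅, finite_empty, fun D hD hu hv hne => (huv (hD.reachable hu hv hne)).elim⟩
    refine ((finite_singleton (G.connectedComponentMk u).supp).union
      (hE.biUnion fun f _ => ih (G.deleteEdges {f}))).subset ?_
    rintro D ⟨hD, hk, hu, hv⟩
    rcases (cutBdry G D).eq_empty_or_nonempty with hD0 | hDne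
    · exact .inl (hD.eq_supp_of_cutBdry_eq_empty hu hD0)
    obtain ⟨f, hfE, hf⟩ := hEmeets D hD hu hv hDne
    refine .inr (mem_biUnion hfE ⟨hD.deleteEdges (singleton_subset_iff.2 hf), ?_, hu, hv⟩)
    rw [cutBdry_deleteEdges, ← ENat.add_le_add_iff_right ENat.one_ne_top,
      encard_sdiff_singleton_add_one hf]
    exact_mod_cast hk

end Tight

section Narrow

variable {V : Type*} {Θ : SimpleGraph V} {P : Set (Sym2 V) → Prop} {B : Set (Sym2 V)}
  {C X Y : Set V}

def ClosedUnderSubsets (P : Set (Sym2 V) → Prop) : Prop :=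
  ∀ F F' : Set (Sym2 V), F.Finite → F' ⊆ F → P F → P F'

def ClosedUnderUnions (P : Set (Sym2 V) → Prop) : Prop :=
  ∀ F F' : Set (Sym2 V), F.Finite → F'.Finite → P F → P F' → P (F ∪ F')

theorem isPCut_of_isComponent (hsub : ClosedUnderSubsets P) (hB : B.Finite)
    (hBE : B ⊆ Θ.edgeSet) (hPB : P B) (hX : IsComponent (Θ.deleteEdges B) X)
    (hY : IsComponent (Θ.deleteEdges B) Y) (hXY : Disjoint X Y) (hXi : X.Infinite)
    (hYi : Y.Infinite) : IsPCut Θ P X := by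
  refine ⟨?_, hsub B _ hB hX.cutBdry_subset hPB⟩
  obtain ⟨K, rfl⟩ := hX
  obtain ⟨L, rfl⟩ := hY
  have hKL : K ≠ L := by
    rintro rfl
    exact hXi.nonempty.ne_empty (disjoint_self.1 hXY)
  refine ⟨B, ⟨hB, hBE, fun hc => hKL ?_, K, L, hKL, hXi, hYi⟩, K, hXi, rfl⟩
  have := hc.preconnected.subsingleton_connectedComponent
  exact Subsingleton.elim K L

namespace IsCut

theorem finite_cutBdry (h : IsCut Θ C) : (cutBdry Θ C).Finite := by
  obtain ⟨F, hF, K, -, rfl⟩ := h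
  exact hF.1.subset (IsComponent.cutBdry_subset ⟨K, rfl⟩)

theorem infinite_s9 (h : IsCut Θ C) : C.Infinite := by
  obtain ⟨F, -, K, hK, rfl⟩ := h
  exact hK

theorem infinite_compl (h : IsCut Θ C) : Cᶜ.Infinite := by
  obtain ⟨F, ⟨-, -, -, K, L, hKL, hK, hL⟩, M, -, rfl⟩ := h
  obtain ⟨N, hNM, hN⟩ : ∃ N, N ≠ M ∧ N.supp.Infinite := by
    by_cases hKM : K = M
    · exact ⟨L, hKM ▸ hKL.symm, hL⟩
    · exact ⟨K, hKM, hK⟩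
  exact hN.mono fun x hxN hxM => hNM (ConnectedComponent.eq_of_common_vertex hxN hxM)

theorem isComponent (h : IsCut Θ C) : IsComponent (Θ.deleteEdges (cutBdry Θ C)) C := by
  obtain ⟨F, -, K, -, rfl⟩ := h
  have hK : IsComponent (Θ.deleteEdges F) K.supp := ⟨K, rfl⟩
  exact hK.of_le (deleteEdges_anti hK.cutBdry_subset) fun x y hxy =>
    (mem_iff_mem_of_reachable subset_rfl hxy.reachable).1

end IsCut

namespace IsPNarrow

theorem isComponent_compl (hconn : Θ.Connected) (hsub : ClosedUnderSubsets P)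
    (hC : IsPNarrow Θ P C) : IsComponent (Θ.deleteEdges (cutBdry Θ C)) Cᶜ := by
  have hcut := hC.1.1
  obtain ⟨W, hWC, hWi, hW⟩ := exists_infinite_isComponent hconn hcut.finite_cutBdry
    hcut.infinite_compl (by simpa using hcut.infinite_s9.nonempty) (by rw [cutBdry_compl_s9])
  have hWP : IsPCut Θ P W := isPCut_of_isComponent hsub hcut.finite_cutBdry cutBdry_subset_edgeSet_s9
    hC.1.2 hW hcut.isComponent (subset_compl_iff_disjoint_right.1 hWC) hWi hcut.infinite_s9
  have hWbd : cutBdry Θ W = cutBdry Θ C :=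
    eq_of_subset_of_ncard_le hW.cutBdry_subset (hC.2 W hWP) hcut.finite_cutBdry
  rwa [← eq_compl_of_cutBdry_eq hconn hcut.infinite_s9.nonempty hWC hWbd]

theorem isTight (hconn : Θ.Connected) (hsub : ClosedUnderSubsets P) (hC : IsPNarrow Θ P C) :
    IsTight Θ C :=
  ⟨hC.1.1.isComponent, hC.isComponent_compl hconn hsub⟩

theorem compl (hconn : Θ.Connected) (hsub : ClosedUnderSubsets P) (hC : IsPNarrow Θ P C) :
    IsPNarrow Θ P Cᶜ := by
  have hcut := hC.1.1
  refine ⟨isPCut_of_isComponent hsub hcut.finite_cutBdry cutBdry_subset_edgeSet_s9 hC.1.2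
    (hC.isComponent_compl hconn hsub) hcut.isComponent disjoint_compl_left hcut.infinite_compl
    hcut.infinite_s9, ?_⟩
  rw [cutBdry_compl_s9]
  exact hC.2

end IsPNarrow

end Narrow

section Nested

variable {V : Type*} {a C D E S X X' : Set V}

theorem Nested.symm (h : Nested C D) : Nested D C := by
  rcases h with h | h | h | h
  · exact .inr (.inr (.inr (compl_subset_compl.2 h)))
  · exact .inr (.inl (subset_compl_comm.1 h))
  · exact .inr (.inr (.inl (compl_subset_comm.1 h)))
  · exact .inl (compl_subset_compl.1 h)

theorem nested_compl_left : Nested Cᶜ D ↔ Nested C D := by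
  unfold Nested
  rw [compl_compl]
  tauto

theorem nested_compl_right : Nested C Dᶜ ↔ Nested C D := by
  unfold Nested
  rw [compl_compl]
  tauto

theorem nested_of_subset_or_subset_compl (hS : S = D ∨ S = Dᶜ) (h : S ⊆ C ∨ S ⊆ Cᶜ) :
    Nested C D := by
  rcases hS with rfl | rfl
  · exact Nested.symm (by tauto)
  · exact nested_compl_right.1 (Nested.symm (by tauto))

theorem Nested.nested_or_nested (h : Nested a E) (hX : X ⊆ a) (hX' : X' ⊆ aᶜ) :
    Nested X E ∨ Nested X' E := by
  rcases h with h | h | h | h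
  · exact .inl (.inl (hX.trans h))
  · exact .inl (.inr (.inl (hX.trans h)))
  · exact .inr (.inl (hX'.trans h))
  · exact .inr (.inr (.inl (hX'.trans h)))

end Nested

section Crossing

variable {V : Type*} {Θ : SimpleGraph V} {P : Set (Sym2 V) → Prop} {a b C : Set V}

def crossingSet (Θ : SimpleGraph V) (P : Set (Sym2 V) → Prop) (C : Set V) : Set (Set V) :=
  {D | IsPNarrow Θ P D ∧ ¬Nested C D}

theorem crossingSet_compl : crossingSet Θ P Cᶜ = crossingSet Θ P C := by
  simp only [crossingSet, nested_compl_left]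

theorem IsPNarrow.finite_crossingSet (hconn : Θ.Connected) (hsub : ClosedUnderSubsets P)
    (hC : IsPNarrow Θ P C) : (crossingSet Θ P C).Finite := by
  set W := {z | ∃ e ∈ cutBdry Θ C, z ∈ e}
  have hW : W.Finite := finite_setOf_exists_mem_sym2 hC.1.1.finite_cutBdry
  refine (hW.biUnion fun z _ => hW.biUnion fun z' _ =>
    finite_setOf_isTight Θ z z' (cutBdry Θ C).ncard).subset ?_
  rintro D ⟨hD, hCD⟩
  have hDt := hD.isTight hconn hsub
  have hk : (cutBdry Θ D).encard ≤ (cutBdry Θ C).ncard := by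
    rw [← hD.1.1.finite_cutBdry.cast_ncard_eq]
    exact_mod_cast hD.2 C hC.1
  by_contra hsep
  simp only [mem_iUnion₂, mem_ofPred_eq, not_exists, not_and] at hsep
  obtain ⟨S, hS, hSW⟩ : ∃ S, (S = D ∨ S = Dᶜ) ∧ ∀ z ∈ W, z ∉ S := by
    by_cases hWD : ∃ z ∈ W, z ∈ D
    · obtain ⟨z, hzW, hzD⟩ := hWD
      exact ⟨Dᶜ, .inr rfl, fun z' hz'W hz'D => hsep z hzW z' hz'W hDt hk hzD hz'D⟩
    · exact ⟨D, .inl rfl, fun z hzW hzD => hWD ⟨z, hzW, hzD⟩⟩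
  refine hCD (nested_of_subset_or_subset_compl hS
    ((hDt.isComponent_side hS).subset_or_subset_compl fun x y hx _ hxy => ?_))
  by_contra hne
  exact hSW x ⟨s(x, y), mem_cutBdry_iff.2 ⟨(deleteEdges_adj.1 hxy).1, hne⟩,
    Sym2.mem_mk_left x y⟩ hx

theorem exists_isPNarrow_corners (hconn : Θ.Connected) (hsub : ClosedUnderSubsets P)
    (hunion : ClosedUnderUnions P) (ha : IsPNarrow Θ P a) (hb : IsPNarrow Θ P b)
    (hK : (a ∩ b).Infinite) (hK' : (aᶜ ∩ bᶜ).Infinite) :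
    ∃ X X', X ⊆ a ∩ b ∧ X' ⊆ aᶜ ∩ bᶜ ∧
      IsComponent (Θ.deleteEdges (cutBdry Θ a ∪ cutBdry Θ b)) X ∧
      IsComponent (Θ.deleteEdges (cutBdry Θ a ∪ cutBdry Θ b)) X' ∧
      IsPNarrow Θ P X ∧ IsPNarrow Θ P X' := by
  have hafin := ha.1.1.finite_cutBdry
  have hbfin := hb.1.1.finite_cutBdry
  have hB := hafin.union hbfin
  have hBE : cutBdry Θ a ∪ cutBdry Θ b ⊆ Θ.edgeSet :=
    union_subset cutBdry_subset_edgeSet_s9 cutBdry_subset_edgeSet_s9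
  have hPB := hunion _ _ hafin hbfin ha.1.2 hb.1.2
  obtain ⟨X, hXab, hXi, hX⟩ := exists_infinite_isComponent hconn hB hK
    (hK'.nonempty.mono fun x hx hx' => hx.1 hx'.1) cutBdry_inter_subset
  obtain ⟨X', hX'ab, hX'i, hX'⟩ := exists_infinite_isComponent hconn hB hK'
    (hK.nonempty.mono fun x hx hx' => hx'.1 hx.1)
    (by simpa only [cutBdry_compl_s9] using cutBdry_inter_subset (G := Θ) (A := aᶜ) (B := bᶜ))
  have hdisj : Disjoint X X' :=
    disjoint_left.2 fun x hx hx' => (hX'ab hx').1 (hXab hx).1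
  have hXP := isPCut_of_isComponent hsub hB hBE hPB hX hX' hdisj hXi hX'i
  have hX'P := isPCut_of_isComponent hsub hB hBE hPB hX' hX hdisj.symm hX'i hXi
  -- `|∂X| + |∂X'| ≤ |∂a| + |∂b|`, and each of the four terms is at least the narrow size
  have hcard := ncard_add_ncard_add_ncard_diff_le hafin hbfin
    (union_subset hX.cutBdry_subset hX'.cutBdry_subset) (cutBdry_inter_cutBdry_subset hXab hX'ab)
  have := ha.2 X' hX'P
  have := hb.2 X hXP
  refine ⟨X, X', hXab, hX'ab, hX, hX', ⟨hXP, fun D hD => ?_⟩, ⟨hX'P, fun D hD => ?_⟩⟩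
  · have := hb.2 D hD
    omega
  · have := ha.2 D hD
    omega

theorem nested_of_isComponent_subset_inter {E X : Set V} (hab : ¬Nested a b)
    (hE : IsTight Θ E) (hX : IsComponent (Θ.deleteEdges (cutBdry Θ a ∪ cutBdry Θ b)) X)
    (hXab : X ⊆ a ∩ b) (hEa : Nested E a) (hEb : Nested E b) : Nested X E := by
  obtain ⟨S, hS, hSab⟩ : ∃ S, (S = E ∨ S = Eᶜ) ∧ (S ⊆ a ∩ b ∨ S ⊆ aᶜ ∨ S ⊆ bᶜ) := by
    rcases hEa with h | h | h | h
    · rcases hEb with h' | h' | h' | h'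
      · exact ⟨E, .inl rfl, .inl (subset_inter h h')⟩
      · exact ⟨E, .inl rfl, .inr (.inr h')⟩
      · exact (hab (.inr (.inr (.inl ((compl_subset_compl.2 h).trans h'))))).elim
      · exact ⟨Eᶜ, .inr rfl, .inr (.inr h')⟩
    · exact ⟨E, .inl rfl, .inr (.inl h)⟩
    · rcases hEb with h' | h' | h' | h'
      · exact (hab (.inr (.inr (.inl ((compl_subset_comm.1 h).trans h'))))).elim
      · exact ⟨E, .inl rfl, .inr (.inr h')⟩
      · exact ⟨Eᶜ, .inr rfl, .inl (subset_inter h h')⟩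
      · exact ⟨Eᶜ, .inr rfl, .inr (.inr h')⟩
    · exact ⟨Eᶜ, .inr rfl, .inr (.inl h)⟩
  refine nested_of_subset_or_subset_compl hS ?_
  rcases hSab with h | h | h
  · refine (hE.isComponent_side hS).subset_or_subset_compl fun x y hx hy hxy =>
      hX.mem_iff_of_adj ?_
    have := h hx
    have := h hy
    simp_all [mem_cutBdry_iff]
  · exact .inr fun x hx hxX => h hx (hXab hxX).1
  · exact .inr fun x hx hxX => h hx (hXab hxX).2

theorem crossingSet_union_crossingSet_subset {X X' : Set V} (hconn : Θ.Connected)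
    (hsub : ClosedUnderSubsets P) (hab : ¬Nested a b)
    (hX : IsComponent (Θ.deleteEdges (cutBdry Θ a ∪ cutBdry Θ b)) X) (hXab : X ⊆ a ∩ b)
    (hX' : IsComponent (Θ.deleteEdges (cutBdry Θ a ∪ cutBdry Θ b)) X') (hX'ab : X' ⊆ aᶜ ∩ bᶜ) :
    crossingSet Θ P X ∪ crossingSet Θ P X' ⊆ crossingSet Θ P a ∪ crossingSet Θ P b := by
  intro E hE
  have hEn : IsPNarrow Θ P E := hE.elim And.left And.left
  by_contra hEab
  simp only [crossingSet, mem_union, mem_ofPred_eq, hEn, true_and, not_or, not_not] at hEab hE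
  rcases hE with hXE | hX'E
  · exact hXE (nested_of_isComponent_subset_inter hab (hEn.isTight hconn hsub) hX hXab
      hEab.1.symm hEab.2.symm)
  · refine hX'E (nested_of_isComponent_subset_inter (a := aᶜ) (b := bᶜ)
      (by rwa [nested_compl_left, nested_compl_right]) (hEn.isTight hconn hsub)
      (by rwa [cutBdry_compl_s9, cutBdry_compl_s9]) hX'ab ?_ ?_)
    exacts [nested_compl_right.2 hEab.1.symm, nested_compl_right.2 hEab.2.symm]

theorem crossingSet_inter_crossingSet_subset {X X' : Set V} (hXab : X ⊆ a ∩ b)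
    (hX'ab : X' ⊆ aᶜ ∩ bᶜ) :
    crossingSet Θ P X ∩ crossingSet Θ P X' ⊆ crossingSet Θ P a ∩ crossingSet Θ P b := by
  rintro E ⟨⟨hEn, hXE⟩, -, hX'E⟩
  refine ⟨⟨hEn, fun h => ?_⟩, ⟨hEn, fun h => ?_⟩⟩
  · exact (h.nested_or_nested (hXab.trans inter_subset_left)
      (hX'ab.trans inter_subset_left)).elim hXE hX'E
  · exact (h.nested_or_nested (hXab.trans inter_subset_right)
      (hX'ab.trans inter_subset_right)).elim hXE hX'E

theorem nested_of_minimal_of_infinite_inter (hconn : Θ.Connected) (hsub : ClosedUnderSubsets P)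
    (hunion : ClosedUnderUnions P) (ha : IsPNarrow Θ P a) (hb : IsPNarrow Θ P b)
    (hma : ∀ D, IsPNarrow Θ P D → (crossingSet Θ P a).ncard ≤ (crossingSet Θ P D).ncard)
    (hmb : ∀ D, IsPNarrow Θ P D → (crossingSet Θ P b).ncard ≤ (crossingSet Θ P D).ncard)
    (hK : (a ∩ b).Infinite) (hK' : (aᶜ ∩ bᶜ).Infinite) : Nested a b := by
  by_contra hab
  obtain ⟨X, X', hXab, hX'ab, hX, hX', hXn, hX'n⟩ :=
    exists_isPNarrow_corners hconn hsub hunion ha hb hK hK'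
  have hU := crossingSet_union_crossingSet_subset hconn hsub hab hX hXab hX' hX'ab
  have hI := crossingSet_inter_crossingSet_subset (Θ := Θ) (P := P) hXab hX'ab
  set cr := crossingSet Θ P
  have hfin {Z : Set V} (hZ : IsPNarrow Θ P Z) : (cr Z).Finite := hZ.finite_crossingSet hconn hsub
  have hab2 : 2 ≤ ((cr a ∪ cr b) \ (cr X ∪ cr X')).ncard := by
    have hne : a ≠ b := by
      rintro rfl
      exact hab (.inl subset_rfl)
    rw [← ncard_pair hne]
    refine ncard_le_ncard ?_ ((hfin ha).union (hfin hb)).sdiff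
    rintro _ (rfl | rfl)
    · refine ⟨.inr ⟨ha, fun h => hab h.symm⟩, ?_⟩
      rintro (h | h)
      exacts [h.2 (.inl (hXab.trans inter_subset_left)),
        h.2 (.inr (.inl (hX'ab.trans inter_subset_left)))]
    · refine ⟨.inl ⟨hb, hab⟩, ?_⟩
      rintro (h | h)
      exacts [h.2 (.inl (hXab.trans inter_subset_right)),
        h.2 (.inr (.inl (hX'ab.trans inter_subset_right)))]
  have := ncard_add_ncard_add_ncard_diff_le (hfin ha) (hfin hb) hU hI
  have := hma X hXn
  have := hmb X' hX'n
  omega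

end Crossing

theorem optimally_nested_cuts_are_nested_general
    {V : Type*} (Θ : SimpleGraph V) (hconn : Θ.Connected)
    (P : Set (Sym2 V) → Prop)
    (hsub : ∀ F F' : Set (Sym2 V), F.Finite → F' ⊆ F → P F → P F')
    (hunion : ∀ F F' : Set (Sym2 V), F.Finite → F'.Finite → P F → P F' → P (F ∪ F')) :
    -- `m(C)` is finite :
    (∀ C : Set V, IsPNarrow Θ P C →
      {D : Set V | IsPNarrow Θ P D ∧ ¬ Nested C D}.Finite) ∧
    -- optimally nested `P`-narrow cuts are nested with each other :
    (∀ C C' : Set V, IsPNarrow Θ P C → IsPNarrow Θ P C' →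
      (∀ D : Set V, IsPNarrow Θ P D →
        {E : Set V | IsPNarrow Θ P E ∧ ¬ Nested C E}.ncard ≤
          {E : Set V | IsPNarrow Θ P E ∧ ¬ Nested D E}.ncard) →
      (∀ D : Set V, IsPNarrow Θ P D →
        {E : Set V | IsPNarrow Θ P E ∧ ¬ Nested C' E}.ncard ≤
          {E : Set V | IsPNarrow Θ P E ∧ ¬ Nested D E}.ncard) →
      Nested C C') := by
  refine ⟨fun C hC => hC.finite_crossingSet hconn hsub, fun C C' hC hC' hmC hmC' => ?_⟩
  rcases infinite_inter_or_infinite_inter_compl hC.1.1.infinite_s9 hC.1.1.infinite_compl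
    hC'.1.1.infinite_s9 hC'.1.1.infinite_compl with ⟨hK, hK'⟩ | ⟨hK, hK'⟩
  · exact nested_of_minimal_of_infinite_inter hconn hsub hunion hC hC' hmC hmC' hK hK'
  · -- the other diagonal is the main one for `C` and `C'ᶜ`
    rw [← nested_compl_right]
    exact nested_of_minimal_of_infinite_inter hconn hsub hunion hC (hC'.compl hconn hsub) hmC
      (by rwa [crossingSet_compl]) hK (by rwa [compl_compl])

/-- Let `P` be a property of finite edge sets of a connected graph, stable under
subsets and finite unions, and suppose a `P`-cut exists.  Then every `P`-narrow
cut is non-nested with only finitely many `P`-narrow cuts, and any two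
*optimally nested* `P`-narrow cuts (those minimising the number `m(C)` of
`P`-narrow cuts not nested with them) are nested with each other. -/
theorem optimally_nested_cuts_are_nested
    {V : Type*} (Θ : SimpleGraph V) (hconn : Θ.Connected)
    (P : Set (Sym2 V) → Prop)
    (hsub : ∀ F F' : Set (Sym2 V), F.Finite → F' ⊆ F → P F → P F')
    (hunion : ∀ F F' : Set (Sym2 V), F.Finite → F'.Finite → P F → P F' → P (F ∪ F'))
    (hex : ∃ C : Set V, IsPCut Θ P C) :
    -- `m(C)` is finite :
    (∀ C : Set V, IsPNarrow Θ P C →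
      {D : Set V | IsPNarrow Θ P D ∧ ¬ Nested C D}.Finite) ∧
    -- optimally nested `P`-narrow cuts are nested with each other :
    (∀ C C' : Set V, IsPNarrow Θ P C → IsPNarrow Θ P C' →
      (∀ D : Set V, IsPNarrow Θ P D →
        {E : Set V | IsPNarrow Θ P E ∧ ¬ Nested C E}.ncard ≤
          {E : Set V | IsPNarrow Θ P E ∧ ¬ Nested D E}.ncard) →
      (∀ D : Set V, IsPNarrow Θ P D →
        {E : Set V | IsPNarrow Θ P E ∧ ¬ Nested C' E}.ncard ≤
          {E : Set V | IsPNarrow Θ P E ∧ ¬ Nested D E}.ncard) →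
      Nested C C') :=
  optimally_nested_cuts_are_nested_general Θ hconn P hsub hunion
end
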